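/- arXiv:2410.21696 — 5 statements merged into one kernel-verified Lean document; each statement's English description precedes it below -/
import Mathlib

section
/- Let T ≥ 2, N ≥ 2, and K ≥ N − 2. Suppose the random pair (x, Y), taking values in ℝ^N × ℝ^{T×N} with x = (x₁, …, x_N) and Y = [y₁, …, y_N], has a distribution that is absolutely continuous with respect to Lebesgue measure on ℝ^N × ℝ^{T×N}. Then with probability one: the points x₁, …, x_N are pairwise distinct and, after reindexing so that x₁ < x₂ < ⋯ < x_N, every parameter set θ attaining the minimum of problem (P) satisfies f_θ(x) = f_D(x) for all x ∈ ℝ; i.e., the connect-the-dots interpolant f_D is the unique solution of problem (P). -/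
/-!
Shallow univariate (input dimension 1) ReLU networks with `T` outputs,
width `K`, input weights `w k ∈ {−1, +1}`, and a residual connection.
-/

open scoped BigOperators
open Finset

noncomputable section

/-- Parameters of a width-`K`, `T`-output shallow ReLU network with residual
connection, whose input weights are constrained to `{−1, +1}`. -/
structure ReLUParams (T K : ℕ) where
  v : Fin K → EuclideanSpace ℝ (Fin T)
  w : Fin K → ℝ
  b : Fin K → ℝ
  A : EuclideanSpace ℝ (Fin T)
  c : EuclideanSpace ℝ (Fin T)
  hw : ∀ k, w k = 1 ∨ w k = -1

/-- The network function `f_θ(x) = ∑ₖ vₖ (wₖ x + bₖ)₊ + A x + c`. -/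
def nnFun {T K : ℕ} (θ : ReLUParams T K) (x : ℝ) : EuclideanSpace ℝ (Fin T) :=
  (∑ k : Fin K, max (θ.w k * x + θ.b k) 0 • θ.v k) + x • θ.A + θ.c

/-- The objective of problem (P): `∑ₖ ‖vₖ‖₂`. -/
def cost {T K : ℕ} (θ : ReLUParams T K) : ℝ := ∑ k : Fin K, ‖θ.v k‖

/-- Slope vector `sᵢ = (y_{i+1} − yᵢ)/(x_{i+1} − xᵢ)` (0-indexed). -/
def slopeVec {T : ℕ} (x : ℕ → ℝ) (y : ℕ → EuclideanSpace ℝ (Fin T)) (i : ℕ) :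
    EuclideanSpace ℝ (Fin T) :=
  (x (i + 1) - x i)⁻¹ • (y (i + 1) - y i)

/-- The connect-the-dots interpolant `f_D` of the data
`(x 0, y 0), …, (x (N-1), y (N-1))` (0-indexed): it interpolates the data, is
affine on each interval `[xᵢ, x_{i+1}]`, is affine with slopeVec `s 0` on
`(−∞, x 0]` and affine with slopeVec `s (N-2)` on `[x (N-1), ∞)`. -/
def ctd {T : ℕ} (N : ℕ) (x : ℕ → ℝ) (y : ℕ → EuclideanSpace ℝ (Fin T)) (t : ℝ) :
    EuclideanSpace ℝ (Fin T) :=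
  y 0 + (t - x 0) • slopeVec x y 0 +
    ∑ i ∈ Finset.Ico 1 (N - 1), max (t - x i) 0 • (slopeVec x y i - slopeVec x y (i - 1))

/-- Feasibility for problem (P): the network interpolates the data. -/
def Interpolates {T K : ℕ} (N : ℕ) (x : ℕ → ℝ) (y : ℕ → EuclideanSpace ℝ (Fin T))
    (θ : ReLUParams T K) : Prop :=
  ∀ i < N, nnFun θ (x i) = y i

/-- `θ` attains the minimum of problem (P). -/
def IsMinimizer {T K : ℕ} (N : ℕ) (x : ℕ → ℝ) (y : ℕ → EuclideanSpace ℝ (Fin T))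
    (θ : ReLUParams T K) : Prop :=
  Interpolates N x y θ ∧ ∀ θ' : ReLUParams T K, Interpolates N x y θ' → cost θ ≤ cost θ'


/-- Extend a `Fin N`-indexed family of reals to `ℕ` (by zero). -/
def extR (N : ℕ) (x : Fin N → ℝ) : ℕ → ℝ :=
  fun n => if h : n < N then x ⟨n, h⟩ else 0

/-- Extend a `Fin N`-indexed family of vectors to `ℕ` (by zero). -/
def extV {T : ℕ} (N : ℕ) (y : Fin N → EuclideanSpace ℝ (Fin T)) :
    ℕ → EuclideanSpace ℝ (Fin T) :=
  fun n => if h : n < N then y ⟨n, h⟩ else 0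

/-! ### Auxiliary lemmas -/


/-- ramp convexity -/
lemma ramp_convexOn (w b : ℝ) : ConvexOn ℝ Set.univ (fun t => max (w*t+b) 0) := by
  have h1 : ConvexOn ℝ Set.univ (fun t : ℝ => w*t+b) := by
    refine ⟨convex_univ, ?_⟩
    intro x _ y _ a a' ha ha' hab
    simp only [smul_eq_mul]
    apply le_of_eq
    have hb : a' = 1 - a := by linarith
    subst hb; ring
  have h2 : ConvexOn ℝ Set.univ (fun _ : ℝ => (0:ℝ)) := convexOn_const 0 convex_univ
  have he : (fun t : ℝ => max (w*t+b) 0) = (fun t : ℝ => w*t+b) ⊔ (fun _ => 0) := by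
    funext t; simp [Pi.sup_apply]
  rw [he]; exact h1.sup h2

lemma ramp_secant_mono (w b : ℝ) {p q u v : ℝ} (hpq : p < q) (hqu : q ≤ u) (huv : u < v) :
    (max (w*q+b) 0 - max (w*p+b) 0) / (q - p) ≤ (max (w*v+b) 0 - max (w*u+b) 0) / (v - u) := by
  have H := ramp_convexOn w b
  rcases eq_or_lt_of_le hqu with rfl | h
  · exact H.slope_mono_adjacent (Set.mem_univ p) (Set.mem_univ v) hpq huv
  · calc (max (w*q+b) 0 - max (w*p+b) 0) / (q - p)
        ≤ (max (w*u+b) 0 - max (w*q+b) 0) / (u - q) :=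
          H.slope_mono_adjacent (Set.mem_univ p) (Set.mem_univ u) hpq h
      _ ≤ (max (w*v+b) 0 - max (w*u+b) 0) / (v - u) :=
          H.slope_mono_adjacent (Set.mem_univ q) (Set.mem_univ v) h huv

lemma ramp_diff_bounds_pos {b p q : ℝ} (h : p ≤ q) :
    0 ≤ max (q+b) 0 - max (p+b) 0 ∧ max (q+b) 0 - max (p+b) 0 ≤ q - p := by
  rcases le_total (p+b) 0 with h1|h1 <;> rcases le_total (q+b) 0 with h2|h2 <;>
    constructor <;>
    simp only [max_eq_right h1, max_eq_right h2, max_eq_left h1, max_eq_left h2] <;> linarith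

lemma ramp_diff_bounds_neg {b p q : ℝ} (h : p ≤ q) :
    -(q-p) ≤ max (-q+b) 0 - max (-p+b) 0 ∧ max (-q+b) 0 - max (-p+b) 0 ≤ 0 := by
  rcases le_total (-p+b) 0 with h1|h1 <;> rcases le_total (-q+b) 0 with h2|h2 <;>
    constructor <;>
    simp only [max_eq_right h1, max_eq_right h2, max_eq_left h1, max_eq_left h2] <;> linarith

lemma sameRay_term_of_norm_sum_eq {E : Type*} [NormedAddCommGroup E] [NormedSpace ℝ E]
    [StrictConvexSpace ℝ E] {ι : Type*} [DecidableEq ι] {s : Finset ι} {u : ι → E}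
    (h : ‖∑ j ∈ s, u j‖ = ∑ j ∈ s, ‖u j‖) {k : ι} (hk : k ∈ s) :
    SameRay ℝ (u k) (∑ j ∈ s, u j) := by
  set rest := ∑ j ∈ s.erase k, u j with hrest
  have hsum : u k + rest = ∑ j ∈ s, u j := Finset.add_sum_erase s u hk
  have hnorm : ‖rest‖ ≤ ∑ j ∈ s.erase k, ‖u j‖ := norm_sum_le _ _
  have h2 : ∑ j ∈ s, ‖u j‖ = ‖u k‖ + ∑ j ∈ s.erase k, ‖u j‖ :=
    (Finset.add_sum_erase s (fun j => ‖u j‖) hk).symm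
  have key : ‖u k + rest‖ = ‖u k‖ + ‖rest‖ := by
    refine le_antisymm (norm_add_le _ _) ?_
    rw [hsum, h]
    linarith
  have h3 : SameRay ℝ (u k) rest := sameRay_iff_norm_add.mpr key
  have h4 := (SameRay.refl (u k)).add_right h3
  rwa [hsum] at h4


lemma ctd_interp {T : ℕ} {N : ℕ} (hN : 2 ≤ N) (x : ℕ → ℝ) (y : ℕ → EuclideanSpace ℝ (Fin T))
    (hx : ∀ i j : ℕ, i < j → j < N → x i < x j) :
    ∀ p, p < N → ctd N x y (x p) = y p := by
  intro p
  induction p with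
  | zero =>
    intro _
    unfold ctd
    have hz : ∀ i ∈ Finset.Ico 1 (N-1),
        max (x 0 - x i) 0 • (slopeVec x y i - slopeVec x y (i-1)) = 0 := by
      intro i hi; rw [Finset.mem_Ico] at hi
      have : x 0 < x i := hx 0 i (by omega) (by omega)
      rw [max_eq_right (by linarith), zero_smul]
    rw [Finset.sum_eq_zero hz]
    simp
  | succ p ih =>
    intro hp
    have hp' : p < N := by omega
    have hct := ih hp'
    have hxp : x p < x (p+1) := hx p (p+1) (by omega) hp
    have key : ctd N x y (x (p+1)) - ctd N x y (x p) = y (p+1) - y p := by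
      unfold ctd
      have hsum : (∑ i ∈ Finset.Ico 1 (N-1),
            max (x (p+1) - x i) 0 • (slopeVec x y i - slopeVec x y (i-1)))
          - (∑ i ∈ Finset.Ico 1 (N-1),
            max (x p - x i) 0 • (slopeVec x y i - slopeVec x y (i-1)))
          = ∑ i ∈ Finset.Ico 1 (N-1), (if i ≤ p then
              (x (p+1) - x p) • (slopeVec x y i - slopeVec x y (i-1)) else 0) := by
        rw [← Finset.sum_sub_distrib]
        apply Finset.sum_congr rfl
        intro i hi; rw [Finset.mem_Ico] at hi
        by_cases hip : i ≤ p
        · have h1 : x i ≤ x p := by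
            rcases eq_or_lt_of_le hip with rfl | h
            · exact le_refl _
            · exact (hx i p h hp').le
          have h2 : x i < x (p+1) := hx i (p+1) (by omega) hp
          rw [if_pos hip, max_eq_left (by linarith), max_eq_left (by linarith), ← sub_smul]
          congr 1; ring
        · have h3 : x (p+1) ≤ x i := by
            rcases (by omega : p + 1 = i ∨ p + 1 < i) with rfl | h
            · exact le_refl _
            · exact (hx (p+1) i h (by omega)).le
          rw [if_neg hip, max_eq_right (by linarith), max_eq_right (by linarith)]
          simp
      have hfilter : (Finset.Ico 1 (N-1)).filter (· ≤ p) = Finset.Ico 1 (p+1) := by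
        apply Finset.ext
        intro i
        simp only [Finset.mem_filter, Finset.mem_Ico]
        omega
      have htel : ∑ i ∈ Finset.Ico 1 (p+1), (slopeVec x y i - slopeVec x y (i-1))
          = slopeVec x y p - slopeVec x y 0 := by
        rw [Finset.sum_Ico_eq_sum_range]
        have : ∀ k, slopeVec x y (1 + k) - slopeVec x y (1 + k - 1)
            = slopeVec x y (k+1) - slopeVec x y k := by
          intro k
          have e1 : 1 + k = k + 1 := by omega
          have e2 : k + 1 - 1 = k := by omega
          rw [e1, e2]
        rw [Finset.sum_congr rfl (fun k _ => this k)]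
        have := Finset.sum_range_sub (fun k => slopeVec x y k) p
        simpa using this
      have hsum2 : ∑ i ∈ Finset.Ico 1 (N-1), (if i ≤ p then
              (x (p+1) - x p) • (slopeVec x y i - slopeVec x y (i-1)) else 0)
          = (x (p+1) - x p) • (slopeVec x y p - slopeVec x y 0) := by
        rw [Finset.sum_ite, Finset.sum_const_zero, add_zero, hfilter, ← Finset.smul_sum, htel]
      have hslope : (x (p+1) - x p) • slopeVec x y p = y (p+1) - y p := by
        unfold slopeVec
        rw [smul_inv_smul₀ (ne_of_gt (by linarith : (0:ℝ) < x (p+1) - x p))]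
      calc (y 0 + (x (p+1) - x 0) • slopeVec x y 0 +
            ∑ i ∈ Finset.Ico 1 (N-1), max (x (p+1) - x i) 0 • (slopeVec x y i - slopeVec x y (i-1)))
          - (y 0 + (x p - x 0) • slopeVec x y 0 +
            ∑ i ∈ Finset.Ico 1 (N-1), max (x p - x i) 0 • (slopeVec x y i - slopeVec x y (i-1)))
          = ((x (p+1) - x 0) • slopeVec x y 0 - (x p - x 0) • slopeVec x y 0) +
            ((∑ i ∈ Finset.Ico 1 (N-1), max (x (p+1) - x i) 0 • (slopeVec x y i - slopeVec x y (i-1)))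
            - (∑ i ∈ Finset.Ico 1 (N-1), max (x p - x i) 0 • (slopeVec x y i - slopeVec x y (i-1)))) := by
            abel
        _ = (x (p+1) - x p) • slopeVec x y 0 +
            (x (p+1) - x p) • (slopeVec x y p - slopeVec x y 0) := by
            rw [hsum, hsum2, ← sub_smul]
            congr 2
            ring
        _ = (x (p+1) - x p) • slopeVec x y p := by
            rw [smul_sub]; abel
        _ = y (p+1) - y p := hslope
    have : ctd N x y (x (p+1)) = ctd N x y (x p) + (y (p+1) - y p) := by
      rw [← key]; abel
    rw [this, hct]; abel


lemma ctd_network {T N K : ℕ} (hN : 2 ≤ N) (hK : N - 2 ≤ K) (x : ℕ → ℝ)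
    (y : ℕ → EuclideanSpace ℝ (Fin T)) :
    ∃ θ : ReLUParams T K, (∀ t, nnFun θ t = ctd N x y t) ∧
      cost θ = ∑ i ∈ Finset.range (N-2), ‖slopeVec x y (i+1) - slopeVec x y i‖ := by
  classical
  refine ⟨⟨fun k => if (k:ℕ) < N-2 then slopeVec x y ((k:ℕ)+1) - slopeVec x y (k:ℕ) else 0,
    fun _ => 1,
    fun k => if (k:ℕ) < N-2 then -(x ((k:ℕ)+1)) else 0,
    slopeVec x y 0, y 0 - x 0 • slopeVec x y 0, fun k => Or.inl rfl⟩, ?_, ?_⟩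
  · intro t
    unfold nnFun ctd
    simp only
    have hterm : ∀ k : Fin K, max (1 * t + (if (k:ℕ) < N-2 then -(x ((k:ℕ)+1)) else 0)) 0 •
        (if (k:ℕ) < N-2 then slopeVec x y ((k:ℕ)+1) - slopeVec x y (k:ℕ) else 0)
        = (fun n => if n < N-2 then max (t - x (n+1)) 0 •
            (slopeVec x y (n+1) - slopeVec x y n) else 0) (k:ℕ) := by
      intro k
      by_cases h : (k:ℕ) < N-2
      · simp only [if_pos h, one_mul, ← sub_eq_add_neg]
      · simp only [if_neg h, smul_zero]
    rw [Finset.sum_congr rfl (fun k _ => hterm k),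
      Fin.sum_univ_eq_sum_range (fun n => if n < N-2 then max (t - x (n+1)) 0 •
            (slopeVec x y (n+1) - slopeVec x y n) else 0) K]
    have hsub : ∑ n ∈ Finset.range K, (fun n => if n < N-2 then max (t - x (n+1)) 0 •
            (slopeVec x y (n+1) - slopeVec x y n) else 0) n
        = ∑ n ∈ Finset.range (N-2), max (t - x (n+1)) 0 •
            (slopeVec x y (n+1) - slopeVec x y n) := by
      rw [← Finset.sum_subset (Finset.range_subset_range.mpr hK)]
      · apply Finset.sum_congr rfl
        intro n hn
        rw [Finset.mem_range] at hn
        simp [hn]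
      · intro n _ hn
        rw [Finset.mem_range] at hn
        simp [hn]
    rw [hsub]
    have hIco : ∑ i ∈ Finset.Ico 1 (N-1), max (t - x i) 0 • (slopeVec x y i - slopeVec x y (i-1))
        = ∑ n ∈ Finset.range (N-2), max (t - x (n+1)) 0 •
            (slopeVec x y (n+1) - slopeVec x y n) := by
      rw [Finset.sum_Ico_eq_sum_range]
      have : N - 1 - 1 = N - 2 := by omega
      rw [this]
      apply Finset.sum_congr rfl
      intro n _
      have e1 : 1 + n = n + 1 := by omega
      have e2 : n + 1 - 1 = n := by omega
      rw [e1, e2]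
    rw [hIco]
    have : (t - x 0) • slopeVec x y 0 = t • slopeVec x y 0 - x 0 • slopeVec x y 0 := sub_smul t (x 0) _
    rw [this]
    abel
  · unfold cost
    simp only
    have hterm : ∀ k : Fin K, ‖if (k:ℕ) < N-2 then slopeVec x y ((k:ℕ)+1) - slopeVec x y (k:ℕ) else 0‖
        = (fun n => if n < N-2 then ‖slopeVec x y (n+1) - slopeVec x y n‖ else 0) (k:ℕ) := by
      intro k
      by_cases h : (k:ℕ) < N-2 <;> simp [h]
    rw [Finset.sum_congr rfl (fun k _ => hterm k),
      Fin.sum_univ_eq_sum_range (fun n => if n < N-2 then ‖slopeVec x y (n+1) - slopeVec x y n‖ else 0) K]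
    rw [← Finset.sum_subset (Finset.range_subset_range.mpr hK)]
    · apply Finset.sum_congr rfl
      intro n hn
      rw [Finset.mem_range] at hn
      simp [hn]
    · intro n _ hn
      rw [Finset.mem_range] at hn
      simp [hn]


set_option maxHeartbeats 2000000 in
lemma det_unique {T N K : ℕ} (hN : 2 ≤ N) (hK : N - 2 ≤ K)
    (x : ℕ → ℝ) (y : ℕ → EuclideanSpace ℝ (Fin T))
    (hx : ∀ i j : ℕ, i < j → j < N → x i < x j)
    (hG : ∀ i : ℕ, i + 3 < N →
      ¬ SameRay ℝ (slopeVec x y (i+1) - slopeVec x y i)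
        (slopeVec x y (i+2) - slopeVec x y (i+1)))
    (θ : ReLUParams T K) (hθ : IsMinimizer N x y θ) :
    ∀ t, nnFun θ t = ctd N x y t := by
  classical
  obtain ⟨m, rfl⟩ : ∃ m, N = m + 2 := ⟨N - 2, by omega⟩
  set s : ℕ → EuclideanSpace ℝ (Fin T) := fun i => slopeVec x y i with hs_def
  set S : ℕ → EuclideanSpace ℝ (Fin T) := fun i => s (i+1) - s i with hS_def
  set r : Fin K → ℕ → ℝ := fun k i =>
    (max (θ.w k * x (i+1) + θ.b k) 0 - max (θ.w k * x i + θ.b k) 0) / (x (i+1) - x i) with hr_def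
  have hxlt : ∀ i, i ≤ m → x i < x (i+1) := fun i hi => hx i (i+1) (by omega) (by omega)
  have hdpos : ∀ i, i ≤ m → (0:ℝ) < x (i+1) - x i := fun i hi => by
    have := hxlt i hi; linarith
  -- monotonicity of secant slopes
  have hr_mono : ∀ (k : Fin K) (i : ℕ), i < m → r k i ≤ r k (i+1) := by
    intro k i him
    exact ramp_secant_mono (θ.w k) (θ.b k) (hxlt i (by omega)) (le_refl _) (hxlt (i+1) (by omega))
  -- bounds on r
  have hr_bounds : ∀ (k : Fin K) (i : ℕ), i ≤ m →
      (θ.w k = 1 → 0 ≤ r k i ∧ r k i ≤ 1) ∧ (θ.w k = -1 → -1 ≤ r k i ∧ r k i ≤ 0) := by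
    intro k i hi
    have hd := hdpos i hi
    constructor
    · intro hw
      have hb := ramp_diff_bounds_pos (b := θ.b k) (hxlt i hi).le
      rw [hr_def]
      simp only [hw, one_mul]
      constructor
      · exact div_nonneg hb.1 hd.le
      · rw [div_le_one hd]; exact hb.2
    · intro hw
      have hb := ramp_diff_bounds_neg (b := θ.b k) (hxlt i hi).le
      rw [hr_def]
      simp only [hw, neg_one_mul, neg_add_eq_sub]
      constructor
      · rw [le_div_iff₀ hd]
        have := hb.1
        simp only [neg_add_eq_sub] at this ⊢
        linarith
      · apply div_nonpos_of_nonpos_of_nonneg _ hd.le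
        have := hb.2
        simp only [neg_add_eq_sub] at this ⊢
        linarith
  have hswing : ∀ k : Fin K, r k m - r k 0 ≤ 1 := by
    intro k
    rcases θ.hw k with hw | hw
    · have h1 := (hr_bounds k m (le_refl m)).1 hw
      have h2 := (hr_bounds k 0 (by omega)).1 hw
      linarith
    · have h1 := (hr_bounds k m (le_refl m)).2 hw
      have h2 := (hr_bounds k 0 (by omega)).2 hw
      linarith
  -- slope identities
  have hinterp := hθ.1
  have hy : ∀ i, i ≤ m → y (i+1) - y i
      = (∑ k : Fin K, (max (θ.w k * x (i+1) + θ.b k) 0 - max (θ.w k * x i + θ.b k) 0) • θ.v k)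
        + (x (i+1) - x i) • θ.A := by
    intro i hi
    have h1 := hinterp (i+1) (by omega)
    have h2 := hinterp i (by omega)
    rw [← h1, ← h2]
    unfold nnFun
    have hbody : ∀ k ∈ (Finset.univ : Finset (Fin K)),
        (max (θ.w k * x (i+1) + θ.b k) 0 - max (θ.w k * x i + θ.b k) 0) • θ.v k
        = max (θ.w k * x (i+1) + θ.b k) 0 • θ.v k - max (θ.w k * x i + θ.b k) 0 • θ.v k := by
      intro k _; rw [sub_smul]
    rw [Finset.sum_congr rfl hbody, Finset.sum_sub_distrib, sub_smul]
    abel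
  have hs_id : ∀ i, i ≤ m → s i = (∑ k : Fin K, r k i • θ.v k) + θ.A := by
    intro i hi
    have hd := hdpos i hi
    have hne : x (i+1) - x i ≠ 0 := ne_of_gt hd
    rw [hs_def]
    show slopeVec x y i = _
    unfold slopeVec
    rw [hy i hi, smul_add, inv_smul_smul₀ hne, Finset.smul_sum]
    congr 1
    apply Finset.sum_congr rfl
    intro k _
    rw [smul_smul, hr_def]
    congr 1
    field_simp
  have hS_id : ∀ i, i < m → S i = ∑ k : Fin K, (r k (i+1) - r k i) • θ.v k := by
    intro i him
    rw [hS_def]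
    show s (i+1) - s i = _
    rw [hs_id (i+1) (by omega), hs_id i (by omega)]
    have hbody : ∀ k ∈ (Finset.univ : Finset (Fin K)),
        (r k (i+1) - r k i) • θ.v k = r k (i+1) • θ.v k - r k i • θ.v k :=
      fun k _ => sub_smul _ _ _
    rw [Finset.sum_congr rfl hbody, Finset.sum_sub_distrib]
    abel
  -- the chain of inequalities
  have step1 : ∀ i ∈ Finset.range m, ‖S i‖ ≤ ∑ k : Fin K, (r k (i+1) - r k i) * ‖θ.v k‖ := by
    intro i hi
    rw [Finset.mem_range] at hi
    rw [hS_id i hi]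
    refine le_trans (norm_sum_le _ _) (le_of_eq ?_)
    apply Finset.sum_congr rfl
    intro k _
    rw [norm_smul, Real.norm_eq_abs, abs_of_nonneg (sub_nonneg.mpr (hr_mono k i hi))]
  have step2 : ∑ i ∈ Finset.range m, ∑ k : Fin K, (r k (i+1) - r k i) * ‖θ.v k‖
      = ∑ k : Fin K, (r k m - r k 0) * ‖θ.v k‖ := by
    rw [Finset.sum_comm]
    apply Finset.sum_congr rfl
    intro k _
    rw [← Finset.sum_mul, Finset.sum_range_sub (fun i => r k i)]
  have step3 : ∀ k ∈ (Finset.univ : Finset (Fin K)),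
      (r k m - r k 0) * ‖θ.v k‖ ≤ ‖θ.v k‖ :=
    fun k _ => mul_le_of_le_one_left (norm_nonneg _) (hswing k)
  -- minimality gives equality
  obtain ⟨θstar, hθstar_fun, hθstar_cost⟩ := ctd_network (T := T) (N := m+2) (K := K) hN hK x y
  have hθstar_interp : Interpolates (m+2) x y θstar := by
    intro i hi
    rw [hθstar_fun (x i), ctd_interp hN x y hx i hi]
  have hmin : cost θ ≤ ∑ i ∈ Finset.range m, ‖S i‖ := by
    have := hθ.2 θstar hθstar_interp
    rw [hθstar_cost] at this
    have hm2 : m + 2 - 2 = m := by omega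
    rw [hm2] at this
    exact this
  have hchain1 : ∑ i ∈ Finset.range m, ‖S i‖
      ≤ ∑ i ∈ Finset.range m, ∑ k : Fin K, (r k (i+1) - r k i) * ‖θ.v k‖ :=
    Finset.sum_le_sum step1
  have hchain2 : ∑ k : Fin K, (r k m - r k 0) * ‖θ.v k‖ ≤ cost θ := Finset.sum_le_sum step3
  have hallEq : ∑ i ∈ Finset.range m, ‖S i‖
      = ∑ i ∈ Finset.range m, ∑ k : Fin K, (r k (i+1) - r k i) * ‖θ.v k‖ := by
    rw [step2] at hchain1 ⊢
    linarith
  have hallEq2 : ∑ k : Fin K, (r k m - r k 0) * ‖θ.v k‖ = ∑ k : Fin K, ‖θ.v k‖ := by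
    have : cost θ = ∑ k : Fin K, ‖θ.v k‖ := rfl
    rw [step2] at hchain1
    rw [← this]
    linarith
  have hEq1 : ∀ i ∈ Finset.range m, ‖S i‖ = ∑ k : Fin K, (r k (i+1) - r k i) * ‖θ.v k‖ :=
    fun i hi => (Finset.sum_eq_sum_iff_of_le step1).mp hallEq i hi
  have hEq2 : ∀ k : Fin K, (r k m - r k 0) * ‖θ.v k‖ = ‖θ.v k‖ :=
    fun k => (Finset.sum_eq_sum_iff_of_le step3).mp hallEq2 k (Finset.mem_univ k)
  -- same-ray information
  have hsr : ∀ (k : Fin K) (i : ℕ), i < m →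
      SameRay ℝ ((r k (i+1) - r k i) • θ.v k) (S i) := by
    intro k i him
    have hnorm_eq : ‖∑ k' : Fin K, (r k' (i+1) - r k' i) • θ.v k'‖
        = ∑ k' : Fin K, ‖(r k' (i+1) - r k' i) • θ.v k'‖ := by
      rw [← hS_id i him, hEq1 i (Finset.mem_range.mpr him)]
      apply Finset.sum_congr rfl
      intro k' _
      rw [norm_smul, Real.norm_eq_abs, abs_of_nonneg (sub_nonneg.mpr (hr_mono k' i him))]
    have h := sameRay_term_of_norm_sum_eq hnorm_eq (Finset.mem_univ k)
    rwa [← hS_id i him] at h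
  have hray : ∀ (k : Fin K), θ.v k ≠ 0 → ∀ j : ℕ, 1 ≤ j → j < m →
      0 < r k j - r k (j-1) → 0 < r k (j+1) - r k j → False := by
    intro k hv j hj1 hjm hd1 hd2
    have e1 : j - 1 + 1 = j := by omega
    have ray1 : SameRay ℝ (θ.v k) (S (j-1)) := by
      have h := hsr k (j-1) (by omega)
      rw [e1] at h
      exact (SameRay.sameRay_nonneg_smul_right (θ.v k) hd1.le).trans h
        (fun h0 => Or.inl (by
          rcases smul_eq_zero.mp h0 with h' | h'
          · exact absurd h' (ne_of_gt hd1)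
          · exact h'))
    have ray2 : SameRay ℝ (θ.v k) (S j) := by
      have h := hsr k j hjm
      exact (SameRay.sameRay_nonneg_smul_right (θ.v k) hd2.le).trans h
        (fun h0 => Or.inl (by
          rcases smul_eq_zero.mp h0 with h' | h'
          · exact absurd h' (ne_of_gt hd2)
          · exact h'))
    have htrans : SameRay ℝ (S (j-1)) (S j) :=
      ray1.symm.trans ray2 (fun h0 => absurd h0 hv)
    have hGi := hG (j-1) (by omega)
    have e2 : j - 1 + 2 = j + 1 := by omega
    rw [e1, e2] at hGi
    exact hGi (by simpa only [hS_def, hs_def, e1] using htrans)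
  -- locating the kink of each active neuron
  have hfindj : ∀ β : ℝ, x 1 ≤ β → β ≤ x m → (∀ j, 1 ≤ j → j ≤ m → β ≠ x j) →
      ∃ j, 1 ≤ j ∧ j < m ∧ x j < β ∧ β < x (j+1) := by
    intro β hβ1 hβ2 hno
    have hm1 : 1 ≤ m := by
      by_contra hm
      have hm0 : m = 0 := by omega
      rw [hm0] at hβ2
      have := hxlt 0 (by omega)
      linarith
    set F := (Finset.Icc 1 m).filter (fun j => x j < β) with hF
    have h1F : 1 ∈ F := by
      rw [hF, Finset.mem_filter, Finset.mem_Icc]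
      exact ⟨⟨le_refl _, hm1⟩, lt_of_le_of_ne hβ1 (Ne.symm (hno 1 (le_refl _) hm1))⟩
    have hFne : F.Nonempty := ⟨1, h1F⟩
    set j := F.max' hFne with hj
    have hjF : j ∈ F := F.max'_mem hFne
    rw [hF, Finset.mem_filter, Finset.mem_Icc] at hjF
    obtain ⟨⟨hj1, hjm⟩, hxjβ⟩ := hjF
    have hjne : j ≠ m := by
      intro h
      rw [h] at hxjβ
      linarith
    have hjm' : j < m := lt_of_le_of_ne hjm hjne
    have hnear : ¬ x (j+1) < β := by
      intro hlt
      have hmem : j + 1 ∈ F := by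
        rw [hF, Finset.mem_filter, Finset.mem_Icc]
        exact ⟨⟨by omega, by omega⟩, hlt⟩
      have := F.le_max' (j+1) hmem
      rw [← hj] at this
      omega
    have : β < x (j+1) :=
      lt_of_le_of_ne (not_lt.mp hnear) (hno (j+1) (by omega) (by omega))
    exact ⟨j, hj1, hjm', hxjβ, this⟩
  -- main per-neuron structure result
  have hKey : ∀ k : Fin K, ∃ P Q : EuclideanSpace ℝ (Fin T), ∀ t : ℝ,
      max (θ.w k * t + θ.b k) 0 • θ.v k
        = (∑ i ∈ Finset.Ico 1 (m+1), max (t - x i) 0 • ((r k i - r k (i-1)) • θ.v k))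
          + t • P + Q := by
    intro k
    by_cases hv : θ.v k = 0
    · exact ⟨0, 0, fun t => by simp [hv]⟩
    have hnv : ‖θ.v k‖ ≠ 0 := by simpa using hv
    have hswk : r k m - r k 0 = 1 := by
      have h := hEq2 k
      have h' : (r k m - r k 0) * ‖θ.v k‖ = 1 * ‖θ.v k‖ := by rw [h, one_mul]
      exact mul_right_cancel₀ hnv h'
    have hd0 := hdpos 0 (by omega)
    have hdm := hdpos m (le_refl m)
    rcases θ.hw k with hw | hw
    · -- w = 1 : kink at β = -b
      have hrw : ∀ i : ℕ, r k i
          = (max (x (i+1) + θ.b k) 0 - max (x i + θ.b k) 0) / (x (i+1) - x i) := by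
        intro i; rw [hr_def]; simp [hw]
      have hr0 : r k 0 = 0 := by
        have b0 := ((hr_bounds k 0 (by omega)).1 hw).1
        have bm := ((hr_bounds k m (le_refl m)).1 hw).2
        linarith
      have hrm : r k m = 1 := by
        have b0 := ((hr_bounds k 0 (by omega)).1 hw).1
        have bm := ((hr_bounds k m (le_refl m)).1 hw).2
        linarith
      have hb1 : x 1 + θ.b k ≤ 0 := by
        by_contra hpos
        push_neg at hpos
        have hlt : max (x 0 + θ.b k) 0 < x 1 + θ.b k := by
          have hx01 : x 0 < x 1 := hxlt 0 (by omega)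
          rcases le_total (x 0 + θ.b k) 0 with h | h
          · rw [max_eq_right h]; linarith
          · rw [max_eq_left h]; linarith
        have : 0 < r k 0 := by
          rw [hrw 0]
          apply div_pos _ hd0
          rw [max_eq_left hpos.le]
          linarith
        linarith
      have hb2 : 0 ≤ x m + θ.b k := by
        by_contra hneg
        push_neg at hneg
        have hmx : max (x m + θ.b k) 0 = 0 := max_eq_right hneg.le
        have : r k m < 1 := by
          rw [hrw m, hmx, sub_zero, div_lt_one hdm]
          rcases le_total (x (m+1) + θ.b k) 0 with h | h
          · rw [max_eq_right h]; linarith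
          · rw [max_eq_left h]; linarith
        linarith
      have hjex : ∃ j, 1 ≤ j ∧ j ≤ m ∧ -θ.b k = x j := by
        by_contra hno
        push_neg at hno
        obtain ⟨j, hj1, hjm', hxj, hxj1⟩ := hfindj (-θ.b k) (by linarith) (by linarith) hno
        -- here x j < -b < x (j+1), 1 ≤ j < m
        have e1 : j - 1 + 1 = j := by omega
        have hdj := hdpos j (by omega)
        have hdj1 := hdpos (j+1) (by omega)
        have hrj1 : r k (j-1) = 0 := by
          rw [hrw (j-1), e1]
          rw [max_eq_right (by linarith : x j + θ.b k ≤ 0),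
            max_eq_right (by
              have : x (j-1) < x j := by
                have := hxlt (j-1) (by omega); rwa [e1] at this
              linarith : x (j-1) + θ.b k ≤ 0), sub_zero, zero_div]
        have hrj : r k j = (x (j+1) + θ.b k) / (x (j+1) - x j) := by
          rw [hrw j, max_eq_left (by linarith : 0 ≤ x (j+1) + θ.b k),
            max_eq_right (by linarith : x j + θ.b k ≤ 0), sub_zero]
        have hrjpos : 0 < r k j := by
          rw [hrj]; exact div_pos (by linarith) hdj
        have hrjlt : r k j < 1 := by
          rw [hrj, div_lt_one hdj]; linarith
        have hrj2 : r k (j+1) = 1 := by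
          rw [hrw (j+1), max_eq_left (by
              have := hxlt (j+1) (by omega); linarith : 0 ≤ x (j+1+1) + θ.b k),
            max_eq_left (by linarith : 0 ≤ x (j+1) + θ.b k)]
          have : x (j+1+1) + θ.b k - (x (j+1) + θ.b k) = x (j+1+1) - x (j+1) := by ring
          rw [this, div_self (ne_of_gt hdj1)]
        exact hray k hv j hj1 hjm' (by rw [hrj1]; linarith) (by rw [hrj2]; linarith)
      obtain ⟨j, hj1, hjm, hβj⟩ := hjex
      have hbk : θ.b k = -x j := by linarith [hβj.symm] 
      have hri : ∀ i, i ≤ m → r k i = if i < j then (0:ℝ) else 1 := by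
        intro i hi
        have hdi := hdpos i hi
        by_cases hij : i < j
        · have h1 : x (i+1) ≤ x j := by
            rcases (by omega : i + 1 = j ∨ i + 1 < j) with h | h
            · rw [h]
            · exact (hx (i+1) j h (by omega)).le
          rw [if_pos hij, hrw i, hbk,
            max_eq_right (by linarith), max_eq_right (by
              have : x i < x (i+1) := hxlt i hi
              linarith), sub_zero, zero_div]
        · have h2 : x j ≤ x i := by
            rcases (by omega : j = i ∨ j < i) with h | h
            · rw [h]
            · exact (hx j i h (by omega)).le
          rw [if_neg hij, hrw i, hbk,
            max_eq_left (by
              have : x i < x (i+1) := hxlt i hi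
              linarith), max_eq_left (by linarith)]
          have : x (i+1) + -x j - (x i + -x j) = x (i+1) - x i := by ring
          rw [this, div_self (ne_of_gt hdi)]
      have hdr_pat : ∀ i, 1 ≤ i → i ≤ m → r k i - r k (i-1) = if i = j then (1:ℝ) else 0 := by
        intro i h1i him
        rw [hri i him, hri (i-1) (by omega)]
        by_cases hij : i = j
        · rw [if_pos hij, if_neg (by omega : ¬ i < j), if_pos (by omega : i - 1 < j)]
          norm_num
        · rw [if_neg hij]
          by_cases h3 : i < j
          · rw [if_pos h3, if_pos (by omega : i - 1 < j)]; ring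
          · rw [if_neg h3, if_neg (by omega : ¬ i - 1 < j)]; ring
      refine ⟨0, 0, fun t => ?_⟩
      have hcoll : ∀ i ∈ Finset.Ico 1 (m+1),
          max (t - x i) 0 • ((r k i - r k (i-1)) • θ.v k)
          = if i = j then max (t - x j) 0 • θ.v k else 0 := by
        intro i hi
        rw [Finset.mem_Ico] at hi
        rw [hdr_pat i hi.1 (by omega)]
        by_cases hij : i = j
        · rw [if_pos hij, if_pos hij, hij, one_smul]
        · rw [if_neg hij, if_neg hij, zero_smul, smul_zero]
      rw [Finset.sum_congr rfl hcoll, Finset.sum_ite_eq' (Finset.Ico 1 (m+1)) j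
        (fun _ => max (t - x j) 0 • θ.v k),
        if_pos (Finset.mem_Ico.mpr ⟨hj1, by omega⟩)]
      rw [hw, hbk, one_mul, smul_zero, add_zero, add_zero, ← sub_eq_add_neg]
    · -- w = -1 : kink at β = b
      have hrw : ∀ i : ℕ, r k i
          = (max (-x (i+1) + θ.b k) 0 - max (-x i + θ.b k) 0) / (x (i+1) - x i) := by
        intro i; rw [hr_def]; simp [hw]
      have hr0 : r k 0 = -1 := by
        have b0 := ((hr_bounds k 0 (by omega)).2 hw).1
        have bm := ((hr_bounds k m (le_refl m)).2 hw).2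
        linarith
      have hrm : r k m = 0 := by
        have b0 := ((hr_bounds k 0 (by omega)).2 hw).1
        have bm := ((hr_bounds k m (le_refl m)).2 hw).2
        linarith
      have hb1 : 0 ≤ -x 1 + θ.b k := by
        by_contra hneg
        push_neg at hneg
        have hmx : max (-x 1 + θ.b k) 0 = 0 := max_eq_right hneg.le
        have heq : -max (-x 0 + θ.b k) 0 = -1 * (x 1 - x 0) := by
          have h := hr0
          rw [hrw 0, hmx, zero_sub, div_eq_iff (ne_of_gt hd0)] at h
          linarith [h]
        have hx01 : x 0 < x 1 := hxlt 0 (by omega)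
        rcases le_total (-x 0 + θ.b k) 0 with h | h
        · rw [max_eq_right h] at heq; linarith
        · rw [max_eq_left h] at heq; linarith
      have hb2 : -x m + θ.b k ≤ 0 := by
        by_contra hpos
        push_neg at hpos
        have h := hrm
        rw [hrw m, div_eq_iff (ne_of_gt hdm), zero_mul, sub_eq_zero,
          max_eq_left hpos.le] at h
        have hxm : x m < x (m+1) := hxlt m (le_refl m)
        rcases le_total (-x (m+1) + θ.b k) 0 with h2 | h2
        · rw [max_eq_right h2] at h; linarith
        · rw [max_eq_left h2] at h; linarith
      have hjex : ∃ j, 1 ≤ j ∧ j ≤ m ∧ θ.b k = x j := by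
        by_contra hno
        push_neg at hno
        obtain ⟨j, hj1, hjm', hxj, hxj1⟩ := hfindj (θ.b k) (by linarith) (by linarith) hno
        have e1 : j - 1 + 1 = j := by omega
        have hdj := hdpos j (by omega)
        have hdj1 := hdpos (j+1) (by omega)
        have hrj1 : r k (j-1) = -1 := by
          have hxj1j : x (j-1) < x j := by
            have := hxlt (j-1) (by omega); rwa [e1] at this
          rw [hrw (j-1), e1,
            max_eq_left (by linarith : 0 ≤ -x j + θ.b k),
            max_eq_left (by linarith : 0 ≤ -x (j-1) + θ.b k)]
          rw [div_eq_iff (ne_of_gt (by linarith : (0:ℝ) < x j - x (j-1)))]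
          ring
        have hrj : r k j = (x j - θ.b k) / (x (j+1) - x j) := by
          rw [hrw j, max_eq_right (by linarith : -x (j+1) + θ.b k ≤ 0),
            max_eq_left (by linarith : 0 ≤ -x j + θ.b k)]
          rw [div_eq_div_iff (ne_of_gt hdj) (ne_of_gt hdj)]
          ring
        have hrjneg : r k j < 0 := by
          rw [hrj]
          apply div_neg_of_neg_of_pos (by linarith) hdj
        have hrjgt : -1 < r k j := by
          rw [hrj, lt_div_iff₀ hdj]
          linarith
        have hrj2 : r k (j+1) = 0 := by
          have hxj2 : x (j+1) < x (j+1+1) := hxlt (j+1) (by omega)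
          rw [hrw (j+1), max_eq_right (by linarith : -x (j+1+1) + θ.b k ≤ 0),
            max_eq_right (by linarith : -x (j+1) + θ.b k ≤ 0), sub_zero, zero_div]
        exact hray k hv j hj1 hjm' (by rw [hrj1]; linarith) (by rw [hrj2]; linarith)
      obtain ⟨j, hj1, hjm, hbk⟩ := hjex
      have hri : ∀ i, i ≤ m → r k i = if i < j then (-1:ℝ) else 0 := by
        intro i hi
        have hdi := hdpos i hi
        have hxi : x i < x (i+1) := hxlt i hi
        by_cases hij : i < j
        · have h1 : x (i+1) ≤ x j := by
            rcases (by omega : i + 1 = j ∨ i + 1 < j) with h | h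
            · rw [h]
            · exact (hx (i+1) j h (by omega)).le
          rw [if_pos hij, hrw i, hbk,
            max_eq_left (by linarith : 0 ≤ -x (i+1) + x j),
            max_eq_left (by linarith : 0 ≤ -x i + x j)]
          rw [div_eq_iff (ne_of_gt hdi)]
          ring
        · have h2 : x j ≤ x i := by
            rcases (by omega : j = i ∨ j < i) with h | h
            · rw [h]
            · exact (hx j i h (by omega)).le
          rw [if_neg hij, hrw i, hbk,
            max_eq_right (by linarith : -x (i+1) + x j ≤ 0),
            max_eq_right (by linarith : -x i + x j ≤ 0), sub_zero, zero_div]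
      have hdr_pat : ∀ i, 1 ≤ i → i ≤ m → r k i - r k (i-1) = if i = j then (1:ℝ) else 0 := by
        intro i h1i him
        rw [hri i him, hri (i-1) (by omega)]
        by_cases hij : i = j
        · rw [if_pos hij, if_neg (by omega : ¬ i < j), if_pos (by omega : i - 1 < j)]
          norm_num
        · rw [if_neg hij]
          by_cases h3 : i < j
          · rw [if_pos h3, if_pos (by omega : i - 1 < j)]; ring
          · rw [if_neg h3, if_neg (by omega : ¬ i - 1 < j)]; ring
      refine ⟨-θ.v k, x j • θ.v k, fun t => ?_⟩
      have hcoll : ∀ i ∈ Finset.Ico 1 (m+1),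
          max (t - x i) 0 • ((r k i - r k (i-1)) • θ.v k)
          = if i = j then max (t - x j) 0 • θ.v k else 0 := by
        intro i hi
        rw [Finset.mem_Ico] at hi
        rw [hdr_pat i hi.1 (by omega)]
        by_cases hij : i = j
        · rw [if_pos hij, if_pos hij, hij, one_smul]
        · rw [if_neg hij, if_neg hij, zero_smul, smul_zero]
      rw [Finset.sum_congr rfl hcoll, Finset.sum_ite_eq' (Finset.Ico 1 (m+1)) j
        (fun _ => max (t - x j) 0 • θ.v k),
        if_pos (Finset.mem_Ico.mpr ⟨hj1, by omega⟩)]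
      have hmaxid : max (θ.w k * t + θ.b k) 0 = max (t - x j) 0 - (t - x j) := by
        rw [hw, hbk, neg_one_mul]
        rcases le_total (t - x j) 0 with h | h
        · rw [max_eq_left (by linarith : 0 ≤ -t + x j), max_eq_right h]; ring
        · rw [max_eq_right (by linarith : -t + x j ≤ 0), max_eq_left h]; ring
      rw [hmaxid, sub_smul, sub_smul, smul_neg]
      abel
  choose P Q hPQ using hKey
  have hrep : ∀ t : ℝ, nnFun θ t
      = (∑ i ∈ Finset.Ico 1 (m+1), max (t - x i) 0 • (s i - s (i-1)))
        + t • ((∑ k : Fin K, P k) + θ.A) + ((∑ k : Fin K, Q k) + θ.c) := by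
    intro t
    unfold nnFun
    rw [Finset.sum_congr rfl (fun k _ => hPQ k t), Finset.sum_add_distrib,
      Finset.sum_add_distrib, ← Finset.smul_sum, Finset.sum_comm]
    have hinner : ∀ i ∈ Finset.Ico 1 (m+1),
        (∑ k : Fin K, max (t - x i) 0 • ((r k i - r k (i-1)) • θ.v k))
        = max (t - x i) 0 • (s i - s (i-1)) := by
      intro i hi
      rw [Finset.mem_Ico] at hi
      rw [← Finset.smul_sum]
      congr 1
      have him : i - 1 < m := by omega
      have h := hS_id (i-1) him
      have e1 : i - 1 + 1 = i := by omega
      rw [e1] at h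
      rw [← h, hS_def]
      simp only
      rw [e1]
    rw [Finset.sum_congr rfl hinner]
    rw [smul_add]
    abel
  have hctd : ∀ t : ℝ, ctd (m+2) x y t
      = (∑ i ∈ Finset.Ico 1 (m+1), max (t - x i) 0 • (s i - s (i-1)))
        + t • s 0 + (y 0 - x 0 • s 0) := by
    intro t
    unfold ctd
    have hnm : m + 2 - 1 = m + 1 := by omega
    rw [hnm, sub_smul]
    simp only [hs_def]
    abel
  have hδ0 : nnFun θ (x 0) = ctd (m+2) x y (x 0) := by
    rw [hinterp 0 (by omega), ctd_interp hN x y hx 0 (by omega)]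
  have hδ1 : nnFun θ (x 1) = ctd (m+2) x y (x 1) := by
    rw [hinterp 1 (by omega), ctd_interp hN x y hx 1 (by omega)]
  set a' := ((∑ k : Fin K, P k) + θ.A) - s 0 with ha'
  set c' := ((∑ k : Fin K, Q k) + θ.c) - (y 0 - x 0 • s 0) with hc'
  have hdiff : ∀ u : ℝ, nnFun θ u - ctd (m+2) x y u = u • a' + c' := by
    intro u
    rw [hrep u, hctd u, ha', hc', smul_sub]
    abel
  have h0 : x 0 • a' + c' = 0 := by
    have h := hdiff (x 0)
    rw [hδ0, sub_self] at h
    exact h.symm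
  have h1 : x 1 • a' + c' = 0 := by
    have h := hdiff (x 1)
    rw [hδ1, sub_self] at h
    exact h.symm
  have ha0 : a' = 0 := by
    have hsub : (x 1 - x 0) • a' = 0 := by
      rw [sub_smul]
      have : (x 1 • a' + c') - (x 0 • a' + c') = 0 := by rw [h0, h1, sub_self]
      calc x 1 • a' - x 0 • a' = (x 1 • a' + c') - (x 0 • a' + c') := by abel
        _ = 0 := this
    rcases smul_eq_zero.mp hsub with h | h
    · exfalso
      have hx01 : x 0 < x 1 := hxlt 0 (by omega)
      have : x 1 - x 0 ≠ 0 := by linarith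
      exact this h
    · exact h
  have hc0 : c' = 0 := by
    have h := h0
    rw [ha0, smul_zero, zero_add] at h
    exact h
  intro t
  have h := hdiff t
  rw [ha0, hc0, smul_zero, zero_add] at h
  exact sub_eq_zero.mp h



open MeasureTheory



lemma pi_section_null {β : Type*} [MeasureSpace β] [SigmaFinite (volume : Measure β)] {n : ℕ}
    (j : Fin (n + 1)) {S : Set (Fin (n + 1) → β)} (hS : MeasurableSet S)
    (h : ∀ g : Fin n → β, volume {z : β | j.insertNth z g ∈ S} = 0) :
    volume S = 0 := by
  have hp := measurePreserving_piFinSuccAbove (fun _ : Fin (n+1) => (volume : Measure β)) j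
  set e := MeasurableEquiv.piFinSuccAbove (fun _ : Fin (n+1) => β) j with he
  have hpre : MeasurePreserving (⇑e.symm)
      ((volume : Measure β).prod (Measure.pi fun _ : Fin n => (volume : Measure β)))
      (Measure.pi fun _ : Fin (n+1) => (volume : Measure β)) := hp.symm e
  have h1 : (volume : Measure (Fin (n+1) → β)) S
      = (Measure.pi fun _ : Fin (n+1) => (volume : Measure β)) S := by
    rw [volume_pi]
  rw [h1, ← hpre.map_eq, Measure.map_apply e.symm.measurable hS]
  have hA : MeasurableSet (⇑e.symm ⁻¹' S) := e.symm.measurable hS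
  have hswap : ((volume : Measure β).prod (Measure.pi fun _ : Fin n => (volume : Measure β)))
        (⇑e.symm ⁻¹' S)
      = ((Measure.pi fun _ : Fin n => (volume : Measure β)).prod (volume : Measure β))
        (Prod.swap ⁻¹' (⇑e.symm ⁻¹' S)) := by
    rw [← Measure.prod_swap, Measure.map_apply measurable_swap hA]
  rw [hswap, Measure.measure_prod_null (hA.preimage measurable_swap)]
  apply Filter.Eventually.of_forall
  intro g
  simp only [Pi.zero_apply]
  have hsec : (Prod.mk g ⁻¹' (Prod.swap ⁻¹' (⇑e.symm ⁻¹' S))) = {z : β | j.insertNth z g ∈ S} := by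
    ext z
    simp only [Set.mem_preimage, Prod.swap_prod_mk, Set.mem_setOf_eq]
    constructor
    · intro hz
      have : e.symm (z, g) = j.insertNth z g := by
        rfl
      rwa [this] at hz
    · intro hz
      have : e.symm (z, g) = j.insertNth z g := by
        rfl
      rwa [this]
  rw [hsec]
  exact h g
abbrev E (T : ℕ) := EuclideanSpace ℝ (Fin T)

lemma volume_singleton_eq_zero {T : ℕ} (hT : 1 ≤ T) (z : E T) :
    (volume : Measure (E T)) {z} = 0 := by
  haveI : Nonempty (Fin T) := ⟨⟨0, hT⟩⟩
  have hne : ({z} : Set (E T)) = (AffineSubspace.mk' z (⊥ : Submodule ℝ (E T)) : Set (E T)) := by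
    ext w
    simp only [Set.mem_singleton_iff, SetLike.mem_coe, AffineSubspace.mem_mk',
      Submodule.mem_bot, vsub_eq_sub, sub_eq_zero]
  rw [hne]
  apply Measure.addHaar_affineSubspace
  intro h
  have hd := AffineSubspace.direction_mk' z (⊥ : Submodule ℝ (E T))
  rw [h, AffineSubspace.direction_top] at hd
  obtain ⟨v, hv⟩ := exists_ne (0 : E T)
  have hm : v ∈ (⊥ : Submodule ℝ (E T)) := by rw [← hd]; trivial
  rw [Submodule.mem_bot] at hm
  exact hv hm

lemma span_singleton_ne_top {T : ℕ} (hT : 2 ≤ T) {u : E T} (hu : u ≠ 0) :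
    Submodule.span ℝ {u} ≠ ⊤ := by
  intro h
  have h1 := finrank_span_singleton (K := ℝ) hu
  rw [h] at h1
  have h2 : Module.finrank ℝ (⊤ : Submodule ℝ (E T)) = Module.finrank ℝ (E T) :=
    finrank_top ℝ (E T)
  rw [h2, finrank_euclideanSpace_fin] at h1
  omega

lemma null_lin3 {T : ℕ} (hT : 1 ≤ T) {n : ℕ} (a b c : Fin (n+1))
    (hac : a ≠ c) (hbc : b ≠ c) (c0 c1 : ℝ) (hc1 : c1 ≠ 0) :
    volume {y : Fin (n+1) → EuclideanSpace ℝ (Fin T) |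
      c1 • (y c - y b) - c0 • (y b - y a) = 0} = 0 := by
  apply pi_section_null c
  · exact measurableSet_eq_fun
      ((((measurable_pi_apply c).sub (measurable_pi_apply b)).const_smul c1).sub
        (((measurable_pi_apply b).sub (measurable_pi_apply a)).const_smul c0)) measurable_const
  · intro g
    obtain ⟨a', ha'⟩ := Fin.exists_succAbove_eq hac
    obtain ⟨b', hb'⟩ := Fin.exists_succAbove_eq hbc
    have hset : {z : EuclideanSpace ℝ (Fin T) |
        c.insertNth z g ∈ {y : Fin (n+1) → EuclideanSpace ℝ (Fin T) |
          c1 • (y c - y b) - c0 • (y b - y a) = 0}}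
        = {(g b' + c1⁻¹ • (c0 • (g b' - g a')) : EuclideanSpace ℝ (Fin T))} := by
      ext z
      simp only [Set.mem_setOf_eq, Set.mem_singleton_iff, ← ha', ← hb',
        Fin.insertNth_apply_same, Fin.insertNth_apply_succAbove]
      constructor
      · intro hz
        have h2 : c1 • (z - g b') = c0 • (g b' - g a') := by rwa [sub_eq_zero] at hz
        have h3 : z - g b' = c1⁻¹ • (c0 • (g b' - g a')) := by
          rw [← h2, inv_smul_smul₀ hc1]
        have h4 := eq_add_of_sub_eq h3
        rw [h4]; abel
      · intro hz
        rw [hz]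
        have h5 : g b' + c1⁻¹ • (c0 • (g b' - g a')) - g b'
            = c1⁻¹ • (c0 • (g b' - g a')) := by abel
        rw [h5, smul_inv_smul₀ hc1, sub_self]
    rw [hset]
    exact volume_singleton_eq_zero hT _

lemma null_ray4 {T : ℕ} (hT : 2 ≤ T) {n : ℕ} (a b c d : Fin (n+1))
    (had : a ≠ d) (hbd : b ≠ d) (hcd : c ≠ d) (c0 c1 c2 : ℝ) (hc2 : c2 ≠ 0) :
    volume {y : Fin (n+1) → EuclideanSpace ℝ (Fin T) |
      c1 • (y c - y b) - c0 • (y b - y a) ≠ 0 ∧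
      ‖c1 • (y c - y b) - c0 • (y b - y a)‖ • (c2 • (y d - y c) - c1 • (y c - y b))
        = ‖c2 • (y d - y c) - c1 • (y c - y b)‖ • (c1 • (y c - y b) - c0 • (y b - y a))} = 0 := by
  have hS1m : Measurable (fun y : Fin (n+1) → EuclideanSpace ℝ (Fin T) =>
      c1 • (y c - y b) - c0 • (y b - y a)) :=
    (((measurable_pi_apply c).sub (measurable_pi_apply b)).const_smul c1).sub
      (((measurable_pi_apply b).sub (measurable_pi_apply a)).const_smul c0)
  have hS2m : Measurable (fun y : Fin (n+1) → EuclideanSpace ℝ (Fin T) =>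
      c2 • (y d - y c) - c1 • (y c - y b)) :=
    (((measurable_pi_apply d).sub (measurable_pi_apply c)).const_smul c2).sub
      (((measurable_pi_apply c).sub (measurable_pi_apply b)).const_smul c1)
  apply pi_section_null d
  · rw [Set.setOf_and]
    refine MeasurableSet.inter ?_ (measurableSet_eq_fun (hS1m.norm.smul hS2m) (hS2m.norm.smul hS1m))
    have : {y : Fin (n+1) → EuclideanSpace ℝ (Fin T) |
        c1 • (y c - y b) - c0 • (y b - y a) ≠ 0}
        = {y : Fin (n+1) → EuclideanSpace ℝ (Fin T) |
        c1 • (y c - y b) - c0 • (y b - y a) = 0}ᶜ := rfl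
    rw [this]
    exact (measurableSet_eq_fun hS1m measurable_const).compl
  · intro g
    obtain ⟨a', ha'⟩ := Fin.exists_succAbove_eq had
    obtain ⟨b', hb'⟩ := Fin.exists_succAbove_eq hbd
    obtain ⟨c', hc'⟩ := Fin.exists_succAbove_eq hcd
    by_cases hu : c1 • (g c' - g b') - c0 • (g b' - g a') = 0
    · have hset : {z : EuclideanSpace ℝ (Fin T) | d.insertNth z g ∈
          {y : Fin (n+1) → EuclideanSpace ℝ (Fin T) |
            c1 • (y c - y b) - c0 • (y b - y a) ≠ 0 ∧
            ‖c1 • (y c - y b) - c0 • (y b - y a)‖ • (c2 • (y d - y c) - c1 • (y c - y b))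
              = ‖c2 • (y d - y c) - c1 • (y c - y b)‖ • (c1 • (y c - y b) - c0 • (y b - y a))}}
          = ∅ := by
        ext z
        simp only [Set.mem_setOf_eq, ← ha', ← hb', ← hc',
          Fin.insertNth_apply_same, Fin.insertNth_apply_succAbove, hu,
          ne_eq, not_true_eq_false, false_and, Set.mem_empty_iff_false]
      rw [hset]
      simp
    · apply measure_mono_null (t := (AffineSubspace.mk'
        (g c' + c2⁻¹ • (c1 • (g c' - g b')))
        (Submodule.span ℝ {(c1 • (g c' - g b') - c0 • (g b' - g a'))}) : Set _))
      · intro z hz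
        simp only [Set.mem_setOf_eq, ← ha', ← hb', ← hc',
          Fin.insertNth_apply_same, Fin.insertNth_apply_succAbove] at hz
        obtain ⟨h1, h2⟩ := hz
        have hnu : ‖c1 • (g c' - g b') - c0 • (g b' - g a')‖ ≠ 0 := norm_ne_zero_iff.mpr h1
        have hS2span : c2 • (z - g c') - c1 • (g c' - g b')
            ∈ Submodule.span ℝ {(c1 • (g c' - g b') - c0 • (g b' - g a'))} := by
          have he : c2 • (z - g c') - c1 • (g c' - g b')
              = ‖c1 • (g c' - g b') - c0 • (g b' - g a')‖⁻¹ •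
                (‖c2 • (z - g c') - c1 • (g c' - g b')‖ •
                  (c1 • (g c' - g b') - c0 • (g b' - g a'))) := by
            rw [← h2, inv_smul_smul₀ hnu]
          rw [he]
          exact Submodule.smul_mem _ _ (Submodule.smul_mem _ _
            (Submodule.mem_span_singleton_self _))
        rw [SetLike.mem_coe, AffineSubspace.mem_mk', vsub_eq_sub]
        have hzz : z - (g c' + c2⁻¹ • (c1 • (g c' - g b')))
            = c2⁻¹ • (c2 • (z - g c') - c1 • (g c' - g b')) := by
          rw [smul_sub c2⁻¹ (c2 • (z - g c')) (c1 • (g c' - g b')), inv_smul_smul₀ hc2]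
          abel
        rw [hzz]
        exact Submodule.smul_mem _ _ hS2span
      · apply Measure.addHaar_affineSubspace
        intro htop
        have hd := AffineSubspace.direction_mk' (g c' + c2⁻¹ • (c1 • (g c' - g b')))
          (Submodule.span ℝ {(c1 • (g c' - g b') - c0 • (g b' - g a'))})
        rw [htop, AffineSubspace.direction_top] at hd
        exact span_singleton_ne_top hT hu hd.symm

lemma null_coord_eq {n : ℕ} (i j : Fin (n+1)) (hij : i ≠ j) :
    volume {x : Fin (n+1) → ℝ | x i = x j} = 0 := by
  apply pi_section_null i
  · exact measurableSet_eq_fun (measurable_pi_apply i) (measurable_pi_apply j)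
  · intro g
    obtain ⟨j', hj'⟩ := Fin.exists_succAbove_eq (Ne.symm hij)
    have hset : {z : ℝ | i.insertNth z g ∈ {x : Fin (n+1) → ℝ | x i = x j}} = {g j'} := by
      ext z
      simp only [Set.mem_setOf_eq, Set.mem_singleton_iff, ← hj',
        Fin.insertNth_apply_same, Fin.insertNth_apply_succAbove]
    rw [hset]
    exact measure_singleton _

lemma bad1_null {T n : ℕ} (i j : Fin (n+1)) :
    volume {p : (Fin (n+1) → ℝ) × (Fin (n+1) → EuclideanSpace ℝ (Fin T)) |
      i ≠ j ∧ p.1 i = p.1 j} = 0 := by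
  by_cases hij : i = j
  · have : {p : (Fin (n+1) → ℝ) × (Fin (n+1) → EuclideanSpace ℝ (Fin T)) |
        i ≠ j ∧ p.1 i = p.1 j} = ∅ := by
      ext p; simp [hij]
    rw [this]; simp
  · have hm1 : ∀ (k : Fin (n+1)), Measurable
        (fun p : (Fin (n+1) → ℝ) × (Fin (n+1) → EuclideanSpace ℝ (Fin T)) => p.1 k) :=
      fun k => (measurable_pi_apply k).comp measurable_fst
    have hmeas : MeasurableSet {p : (Fin (n+1) → ℝ) × (Fin (n+1) → EuclideanSpace ℝ (Fin T)) |
        i ≠ j ∧ p.1 i = p.1 j} := by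
      rw [Set.setOf_and]
      exact (MeasurableSet.const _).inter (measurableSet_eq_fun (hm1 i) (hm1 j))
    rw [Measure.volume_eq_prod, Measure.measure_prod_null hmeas]
    have h0 := null_coord_eq i j hij
    rw [measure_eq_zero_iff_ae_notMem] at h0
    filter_upwards [h0] with x hx
    simp only [Pi.zero_apply]
    have : (Prod.mk x ⁻¹' {p : (Fin (n+1) → ℝ) × (Fin (n+1) → EuclideanSpace ℝ (Fin T)) |
        i ≠ j ∧ p.1 i = p.1 j}) = ∅ := by
      ext y
      simp only [Set.mem_preimage, Set.mem_setOf_eq, Set.mem_empty_iff_false, iff_false, not_and]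
      intro _
      exact hx
    rw [this]; simp

lemma bad2_null {T n : ℕ} (hT : 1 ≤ T) (a b c : Fin (n+1)) :
    volume {p : (Fin (n+1) → ℝ) × (Fin (n+1) → EuclideanSpace ℝ (Fin T)) |
      (a ≠ c ∧ b ≠ c ∧ p.1 b ≠ p.1 c) ∧
      (p.1 c - p.1 b)⁻¹ • (p.2 c - p.2 b) - (p.1 b - p.1 a)⁻¹ • (p.2 b - p.2 a) = 0} = 0 := by
  have hm1 : ∀ (i : Fin (n+1)), Measurable
      (fun p : (Fin (n+1) → ℝ) × (Fin (n+1) → EuclideanSpace ℝ (Fin T)) => p.1 i) :=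
    fun i => (measurable_pi_apply i).comp measurable_fst
  have hm2 : ∀ (i : Fin (n+1)), Measurable
      (fun p : (Fin (n+1) → ℝ) × (Fin (n+1) → EuclideanSpace ℝ (Fin T)) => p.2 i) :=
    fun i => (measurable_pi_apply i).comp measurable_snd
  have hmeas : MeasurableSet {p : (Fin (n+1) → ℝ) × (Fin (n+1) → EuclideanSpace ℝ (Fin T)) |
      (a ≠ c ∧ b ≠ c ∧ p.1 b ≠ p.1 c) ∧
      (p.1 c - p.1 b)⁻¹ • (p.2 c - p.2 b) - (p.1 b - p.1 a)⁻¹ • (p.2 b - p.2 a) = 0} := by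
    rw [Set.setOf_and]
    refine MeasurableSet.inter ?_ ?_
    · rw [Set.setOf_and]
      refine (MeasurableSet.const _).inter ?_
      rw [Set.setOf_and]
      refine (MeasurableSet.const _).inter ?_
      exact (measurableSet_eq_fun (hm1 b) (hm1 c)).compl
    · exact measurableSet_eq_fun
        ((((hm1 c).sub (hm1 b)).inv.smul ((hm2 c).sub (hm2 b))).sub
          ((((hm1 b).sub (hm1 a)).inv.smul ((hm2 b).sub (hm2 a)))))
        measurable_const
  rw [Measure.volume_eq_prod, Measure.measure_prod_null hmeas]
  apply Filter.Eventually.of_forall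
  intro x
  simp only [Pi.zero_apply]
  by_cases hc : a ≠ c ∧ b ≠ c ∧ x b ≠ x c
  · obtain ⟨hac, hbc, hxbc⟩ := hc
    have hset : (Prod.mk x ⁻¹' {p : (Fin (n+1) → ℝ) × (Fin (n+1) → EuclideanSpace ℝ (Fin T)) |
        (a ≠ c ∧ b ≠ c ∧ p.1 b ≠ p.1 c) ∧
        (p.1 c - p.1 b)⁻¹ • (p.2 c - p.2 b) - (p.1 b - p.1 a)⁻¹ • (p.2 b - p.2 a) = 0})
        = {y : Fin (n+1) → EuclideanSpace ℝ (Fin T) |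
          (x c - x b)⁻¹ • (y c - y b) - (x b - x a)⁻¹ • (y b - y a) = 0} := by
      ext y
      simp only [Set.mem_preimage, Set.mem_setOf_eq, hac, hbc, hxbc, ne_eq,
        not_false_eq_true, true_and]
    rw [hset]
    exact null_lin3 hT a b c hac hbc _ _ (inv_ne_zero (sub_ne_zero.mpr (Ne.symm hxbc)))
  · have hset : (Prod.mk x ⁻¹' {p : (Fin (n+1) → ℝ) × (Fin (n+1) → EuclideanSpace ℝ (Fin T)) |
        (a ≠ c ∧ b ≠ c ∧ p.1 b ≠ p.1 c) ∧
        (p.1 c - p.1 b)⁻¹ • (p.2 c - p.2 b) - (p.1 b - p.1 a)⁻¹ • (p.2 b - p.2 a) = 0})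
        = ∅ := by
      ext y
      simp only [Set.mem_preimage, Set.mem_setOf_eq, Set.mem_empty_iff_false, iff_false, not_and]
      intro h _
      exact hc h
    rw [hset]; simp

lemma bad3_null {T n : ℕ} (hT : 2 ≤ T) (a b c d : Fin (n+1)) :
    volume {p : (Fin (n+1) → ℝ) × (Fin (n+1) → EuclideanSpace ℝ (Fin T)) |
      (a ≠ d ∧ b ≠ d ∧ c ≠ d ∧ p.1 c ≠ p.1 d ∧
        (p.1 c - p.1 b)⁻¹ • (p.2 c - p.2 b) - (p.1 b - p.1 a)⁻¹ • (p.2 b - p.2 a) ≠ 0) ∧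
      ‖(p.1 c - p.1 b)⁻¹ • (p.2 c - p.2 b) - (p.1 b - p.1 a)⁻¹ • (p.2 b - p.2 a)‖ •
          ((p.1 d - p.1 c)⁻¹ • (p.2 d - p.2 c) - (p.1 c - p.1 b)⁻¹ • (p.2 c - p.2 b))
        = ‖(p.1 d - p.1 c)⁻¹ • (p.2 d - p.2 c) - (p.1 c - p.1 b)⁻¹ • (p.2 c - p.2 b)‖ •
          ((p.1 c - p.1 b)⁻¹ • (p.2 c - p.2 b) - (p.1 b - p.1 a)⁻¹ • (p.2 b - p.2 a))} = 0 := by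
  have hm1 : ∀ (i : Fin (n+1)), Measurable
      (fun p : (Fin (n+1) → ℝ) × (Fin (n+1) → EuclideanSpace ℝ (Fin T)) => p.1 i) :=
    fun i => (measurable_pi_apply i).comp measurable_fst
  have hm2 : ∀ (i : Fin (n+1)), Measurable
      (fun p : (Fin (n+1) → ℝ) × (Fin (n+1) → EuclideanSpace ℝ (Fin T)) => p.2 i) :=
    fun i => (measurable_pi_apply i).comp measurable_snd
  have hS1 : Measurable (fun p : (Fin (n+1) → ℝ) × (Fin (n+1) → EuclideanSpace ℝ (Fin T)) =>
      (p.1 c - p.1 b)⁻¹ • (p.2 c - p.2 b) - (p.1 b - p.1 a)⁻¹ • (p.2 b - p.2 a)) :=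
    (((hm1 c).sub (hm1 b)).inv.smul ((hm2 c).sub (hm2 b))).sub
      ((((hm1 b).sub (hm1 a)).inv.smul ((hm2 b).sub (hm2 a))))
  have hS2 : Measurable (fun p : (Fin (n+1) → ℝ) × (Fin (n+1) → EuclideanSpace ℝ (Fin T)) =>
      (p.1 d - p.1 c)⁻¹ • (p.2 d - p.2 c) - (p.1 c - p.1 b)⁻¹ • (p.2 c - p.2 b)) :=
    (((hm1 d).sub (hm1 c)).inv.smul ((hm2 d).sub (hm2 c))).sub
      ((((hm1 c).sub (hm1 b)).inv.smul ((hm2 c).sub (hm2 b))))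
  have hmeas : MeasurableSet {p : (Fin (n+1) → ℝ) × (Fin (n+1) → EuclideanSpace ℝ (Fin T)) |
      (a ≠ d ∧ b ≠ d ∧ c ≠ d ∧ p.1 c ≠ p.1 d ∧
        (p.1 c - p.1 b)⁻¹ • (p.2 c - p.2 b) - (p.1 b - p.1 a)⁻¹ • (p.2 b - p.2 a) ≠ 0) ∧
      ‖(p.1 c - p.1 b)⁻¹ • (p.2 c - p.2 b) - (p.1 b - p.1 a)⁻¹ • (p.2 b - p.2 a)‖ •
          ((p.1 d - p.1 c)⁻¹ • (p.2 d - p.2 c) - (p.1 c - p.1 b)⁻¹ • (p.2 c - p.2 b))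
        = ‖(p.1 d - p.1 c)⁻¹ • (p.2 d - p.2 c) - (p.1 c - p.1 b)⁻¹ • (p.2 c - p.2 b)‖ •
          ((p.1 c - p.1 b)⁻¹ • (p.2 c - p.2 b) - (p.1 b - p.1 a)⁻¹ • (p.2 b - p.2 a))} := by
    rw [Set.setOf_and]
    refine MeasurableSet.inter ?_ (measurableSet_eq_fun (hS1.norm.smul hS2) (hS2.norm.smul hS1))
    rw [Set.setOf_and]
    refine (MeasurableSet.const _).inter ?_
    rw [Set.setOf_and]
    refine (MeasurableSet.const _).inter ?_
    rw [Set.setOf_and]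
    refine (MeasurableSet.const _).inter ?_
    rw [Set.setOf_and]
    refine MeasurableSet.inter ?_ ?_
    · exact (measurableSet_eq_fun (hm1 c) (hm1 d)).compl
    · exact (measurableSet_eq_fun hS1 measurable_const).compl
  rw [Measure.volume_eq_prod, Measure.measure_prod_null hmeas]
  apply Filter.Eventually.of_forall
  intro x
  simp only [Pi.zero_apply]
  by_cases hc : a ≠ d ∧ b ≠ d ∧ c ≠ d ∧ x c ≠ x d
  · obtain ⟨had, hbd, hcd, hxcd⟩ := hc
    refine measure_mono_null (fun y hy => ?_)
      (null_ray4 hT a b c d had hbd hcd ((x b - x a)⁻¹) ((x c - x b)⁻¹) ((x d - x c)⁻¹)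
        (inv_ne_zero (sub_ne_zero.mpr (Ne.symm hxcd))))
    exact ⟨hy.1.2.2.2.2, hy.2⟩
  · refine measure_mono_null (t := (∅ : Set (Fin (n+1) → EuclideanSpace ℝ (Fin T))))
      (fun y hy => (hc ⟨hy.1.1, hy.1.2.1, hy.1.2.2.1, hy.1.2.2.2.1⟩).elim) (by simp)


/-- If the random data `(x, Y)` has a distribution absolutely
continuous with respect to Lebesgue measure on `ℝ^N × ℝ^{T×N}` (with `T ≥ 2`,
`N ≥ 2`, `K ≥ N − 2`), then almost surely the points `x₁, …, x_N` are pairwise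
distinct and, after reindexing so that `x₁ < ⋯ < x_N`, every parameter set
attaining the minimum of problem (P) represents the connect-the-dots
interpolant `f_D`; i.e. `f_D` is the unique solution of problem (P). -/
theorem ctd_unique_solution_almost_surely {Ω : Type*} [MeasureSpace Ω]
    [IsProbabilityMeasure (volume : Measure Ω)]
    (T N K : ℕ) (hT : 2 ≤ T) (hN : 2 ≤ N) (hK : N - 2 ≤ K)
    (Z : Ω → (Fin N → ℝ) × (Fin N → EuclideanSpace ℝ (Fin T)))
    (hZ : Measurable Z)
    (habs : Measure.map Z (volume : Measure Ω) ≪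
      (volume : Measure ((Fin N → ℝ) × (Fin N → EuclideanSpace ℝ (Fin T))))) :
    ∀ᵐ ω ∂(volume : Measure Ω),
      Function.Injective (Z ω).1 ∧
      ∀ σ : Equiv.Perm (Fin N), StrictMono ((Z ω).1 ∘ σ) →
        ∀ θ : ReLUParams T K,
          IsMinimizer N (extR N ((Z ω).1 ∘ σ)) (extV N ((Z ω).2 ∘ σ)) θ →
          ∀ t : ℝ,
            nnFun θ t = ctd N (extR N ((Z ω).1 ∘ σ)) (extV N ((Z ω).2 ∘ σ)) t := by
  obtain ⟨n, rfl⟩ : ∃ n, N = n + 1 := ⟨N - 1, by omega⟩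
  have hT1 : 1 ≤ T := by omega
  classical
  set Bad : Set ((Fin (n+1) → ℝ) × (Fin (n+1) → EuclideanSpace ℝ (Fin T))) :=
    ((⋃ (i : Fin (n+1)), ⋃ (j : Fin (n+1)), {p : (Fin (n+1) → ℝ) × (Fin (n+1) → EuclideanSpace ℝ (Fin T)) | i ≠ j ∧ p.1 i = p.1 j})
    ∪ (⋃ (a : Fin (n+1)), ⋃ (b : Fin (n+1)), ⋃ (c : Fin (n+1)),
      {p : (Fin (n+1) → ℝ) × (Fin (n+1) → EuclideanSpace ℝ (Fin T)) |
        (a ≠ c ∧ b ≠ c ∧ p.1 b ≠ p.1 c) ∧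
        (p.1 c - p.1 b)⁻¹ • (p.2 c - p.2 b) - (p.1 b - p.1 a)⁻¹ • (p.2 b - p.2 a) = 0}))
    ∪ (⋃ (a : Fin (n+1)), ⋃ (b : Fin (n+1)), ⋃ (c : Fin (n+1)), ⋃ (d : Fin (n+1)),
      {p : (Fin (n+1) → ℝ) × (Fin (n+1) → EuclideanSpace ℝ (Fin T)) |
        (a ≠ d ∧ b ≠ d ∧ c ≠ d ∧ p.1 c ≠ p.1 d ∧
          (p.1 c - p.1 b)⁻¹ • (p.2 c - p.2 b) - (p.1 b - p.1 a)⁻¹ • (p.2 b - p.2 a) ≠ 0) ∧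
        ‖(p.1 c - p.1 b)⁻¹ • (p.2 c - p.2 b) - (p.1 b - p.1 a)⁻¹ • (p.2 b - p.2 a)‖ •
            ((p.1 d - p.1 c)⁻¹ • (p.2 d - p.2 c) - (p.1 c - p.1 b)⁻¹ • (p.2 c - p.2 b))
          = ‖(p.1 d - p.1 c)⁻¹ • (p.2 d - p.2 c) - (p.1 c - p.1 b)⁻¹ • (p.2 c - p.2 b)‖ •
            ((p.1 c - p.1 b)⁻¹ • (p.2 c - p.2 b) - (p.1 b - p.1 a)⁻¹ • (p.2 b - p.2 a))})
    with hBadDef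
  -- measurability helpers
  have hm1 : ∀ (k : Fin (n+1)), Measurable
      (fun p : (Fin (n+1) → ℝ) × (Fin (n+1) → EuclideanSpace ℝ (Fin T)) => p.1 k) :=
    fun k => (measurable_pi_apply k).comp measurable_fst
  have hm2 : ∀ (k : Fin (n+1)), Measurable
      (fun p : (Fin (n+1) → ℝ) × (Fin (n+1) → EuclideanSpace ℝ (Fin T)) => p.2 k) :=
    fun k => (measurable_pi_apply k).comp measurable_snd
  have hSm : ∀ (a b c : Fin (n+1)), Measurable
      (fun p : (Fin (n+1) → ℝ) × (Fin (n+1) → EuclideanSpace ℝ (Fin T)) =>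
        (p.1 c - p.1 b)⁻¹ • (p.2 c - p.2 b) - (p.1 b - p.1 a)⁻¹ • (p.2 b - p.2 a)) :=
    fun a b c => (((hm1 c).sub (hm1 b)).inv.smul ((hm2 c).sub (hm2 b))).sub
      ((((hm1 b).sub (hm1 a)).inv.smul ((hm2 b).sub (hm2 a))))
  have hBadMeas : MeasurableSet Bad := by
    rw [hBadDef]
    refine MeasurableSet.union (MeasurableSet.union ?_ ?_) ?_
    · refine MeasurableSet.iUnion fun i => MeasurableSet.iUnion fun j => ?_
      rw [Set.setOf_and]
      exact (MeasurableSet.const _).inter (measurableSet_eq_fun (hm1 i) (hm1 j))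
    · refine MeasurableSet.iUnion fun a => MeasurableSet.iUnion fun b =>
        MeasurableSet.iUnion fun c => ?_
      rw [Set.setOf_and]
      refine MeasurableSet.inter ?_ (measurableSet_eq_fun (hSm a b c) measurable_const)
      rw [Set.setOf_and]
      refine (MeasurableSet.const _).inter ?_
      rw [Set.setOf_and]
      refine (MeasurableSet.const _).inter ?_
      exact (measurableSet_eq_fun (hm1 b) (hm1 c)).compl
    · refine MeasurableSet.iUnion fun a => MeasurableSet.iUnion fun b =>
        MeasurableSet.iUnion fun c => MeasurableSet.iUnion fun d => ?_
      rw [Set.setOf_and]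
      refine MeasurableSet.inter ?_
        (measurableSet_eq_fun ((hSm a b c).norm.smul (hSm b c d))
          ((hSm b c d).norm.smul (hSm a b c)))
      rw [Set.setOf_and]
      refine (MeasurableSet.const _).inter ?_
      rw [Set.setOf_and]
      refine (MeasurableSet.const _).inter ?_
      rw [Set.setOf_and]
      refine (MeasurableSet.const _).inter ?_
      rw [Set.setOf_and]
      refine MeasurableSet.inter ?_ ?_
      · exact (measurableSet_eq_fun (hm1 c) (hm1 d)).compl
      · exact (measurableSet_eq_fun (hSm a b c) measurable_const).compl
  have hBadNull : volume Bad = 0 := by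
    rw [hBadDef]
    refine measure_union_null (measure_union_null ?_ ?_) ?_
    · exact measure_iUnion_null fun i => measure_iUnion_null fun j => bad1_null i j
    · exact measure_iUnion_null fun a => measure_iUnion_null fun b =>
        measure_iUnion_null fun c => bad2_null hT1 a b c
    · exact measure_iUnion_null fun a => measure_iUnion_null fun b =>
        measure_iUnion_null fun c => measure_iUnion_null fun d => bad3_null hT a b c d
  have hpre : volume (Z ⁻¹' Bad) = 0 := by
    have h1 := habs hBadNull
    rwa [Measure.map_apply hZ hBadMeas] at h1
  have hae : ∀ᵐ ω ∂(volume : Measure Ω), ω ∉ Z ⁻¹' Bad :=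
    (measure_eq_zero_iff_ae_notMem (μ := (volume : Measure Ω))).mp hpre
  filter_upwards [hae] with ω hω
  constructor
  · -- injectivity
    intro i j hij
    by_contra hne
    apply hω
    rw [hBadDef]
    simp only [Set.mem_preimage, Set.mem_union, Set.mem_iUnion, Set.mem_setOf_eq]
    exact Or.inl (Or.inl ⟨i, j, hne, hij⟩)
  · intro σ hσ θ hθmin t
    refine det_unique hN hK _ _ ?_ ?_ θ hθmin t
    · -- sortedness
      intro i j hij hjN
      have hiN : i < n+1 := by omega
      show extR (n+1) ((Z ω).1 ∘ σ) i < extR (n+1) ((Z ω).1 ∘ σ) j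
      unfold extR
      rw [dif_pos hiN, dif_pos hjN]
      exact hσ (show (⟨i, hiN⟩ : Fin (n+1)) < ⟨j, hjN⟩ from hij)
    · -- genericity
      intro i hi3
      intro hray
      have hiA : i < n+1 := by omega
      have hiB : i+1 < n+1 := by omega
      have hiC : i+2 < n+1 := by omega
      have hiD : i+3 < n+1 := by omega
      have hΔ1 : slopeVec (extR (n+1) ((Z ω).1 ∘ σ)) (extV (n+1) ((Z ω).2 ∘ σ)) (i+1)
          - slopeVec (extR (n+1) ((Z ω).1 ∘ σ)) (extV (n+1) ((Z ω).2 ∘ σ)) i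
          = ((Z ω).1 (σ ⟨i+2, hiC⟩) - (Z ω).1 (σ ⟨i+1, hiB⟩))⁻¹ •
              ((Z ω).2 (σ ⟨i+2, hiC⟩) - (Z ω).2 (σ ⟨i+1, hiB⟩))
            - ((Z ω).1 (σ ⟨i+1, hiB⟩) - (Z ω).1 (σ ⟨i, hiA⟩))⁻¹ •
              ((Z ω).2 (σ ⟨i+1, hiB⟩) - (Z ω).2 (σ ⟨i, hiA⟩)) := by
        unfold slopeVec extR extV
        simp only [dif_pos (show i+1+1 < n+1 by omega), dif_pos (show i+1 < n+1 by omega),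
          dif_pos (show i < n+1 by omega)]
        rfl
      have hΔ2 : slopeVec (extR (n+1) ((Z ω).1 ∘ σ)) (extV (n+1) ((Z ω).2 ∘ σ)) (i+2)
          - slopeVec (extR (n+1) ((Z ω).1 ∘ σ)) (extV (n+1) ((Z ω).2 ∘ σ)) (i+1)
          = ((Z ω).1 (σ ⟨i+3, hiD⟩) - (Z ω).1 (σ ⟨i+2, hiC⟩))⁻¹ •
              ((Z ω).2 (σ ⟨i+3, hiD⟩) - (Z ω).2 (σ ⟨i+2, hiC⟩))
            - ((Z ω).1 (σ ⟨i+2, hiC⟩) - (Z ω).1 (σ ⟨i+1, hiB⟩))⁻¹ •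
              ((Z ω).2 (σ ⟨i+2, hiC⟩) - (Z ω).2 (σ ⟨i+1, hiB⟩)) := by
        unfold slopeVec extR extV
        simp only [dif_pos (show i+2+1 < n+1 by omega), dif_pos (show i+2 < n+1 by omega),
          dif_pos (show i+1+1 < n+1 by omega), dif_pos (show i+1 < n+1 by omega)]
        rfl
      have hinj : ∀ (p q : ℕ) (hp : p < n+1) (hq : q < n+1), p ≠ q →
          σ ⟨p, hp⟩ ≠ σ ⟨q, hq⟩ := by
        intro p q hp hq hpq h
        have := σ.injective h
        rw [Fin.mk.injEq] at this
        exact hpq this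
      have hxBC : (Z ω).1 (σ ⟨i+1, hiB⟩) ≠ (Z ω).1 (σ ⟨i+2, hiC⟩) :=
        ne_of_lt (hσ (show (⟨i+1, hiB⟩ : Fin (n+1)) < ⟨i+2, hiC⟩ from by
          rw [Fin.mk_lt_mk]; omega))
      have hxCD : (Z ω).1 (σ ⟨i+2, hiC⟩) ≠ (Z ω).1 (σ ⟨i+3, hiD⟩) :=
        ne_of_lt (hσ (show (⟨i+2, hiC⟩ : Fin (n+1)) < ⟨i+3, hiD⟩ from by
          rw [Fin.mk_lt_mk]; omega))
      have hΔ1ne : ((Z ω).1 (σ ⟨i+2, hiC⟩) - (Z ω).1 (σ ⟨i+1, hiB⟩))⁻¹ •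
              ((Z ω).2 (σ ⟨i+2, hiC⟩) - (Z ω).2 (σ ⟨i+1, hiB⟩))
            - ((Z ω).1 (σ ⟨i+1, hiB⟩) - (Z ω).1 (σ ⟨i, hiA⟩))⁻¹ •
              ((Z ω).2 (σ ⟨i+1, hiB⟩) - (Z ω).2 (σ ⟨i, hiA⟩)) ≠ 0 := by
        intro h0
        apply hω
        rw [hBadDef]
        simp only [Set.mem_preimage, Set.mem_union, Set.mem_iUnion, Set.mem_setOf_eq]
        exact Or.inl (Or.inr ⟨σ ⟨i, hiA⟩, σ ⟨i+1, hiB⟩, σ ⟨i+2, hiC⟩,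
          ⟨hinj i (i+2) hiA hiC (by omega), hinj (i+1) (i+2) hiB hiC (by omega), hxBC⟩, h0⟩)
      apply hω
      rw [hBadDef]
      simp only [Set.mem_preimage, Set.mem_union, Set.mem_iUnion, Set.mem_setOf_eq]
      refine Or.inr ⟨σ ⟨i, hiA⟩, σ ⟨i+1, hiB⟩, σ ⟨i+2, hiC⟩, σ ⟨i+3, hiD⟩,
        ⟨hinj i (i+3) hiA hiD (by omega), hinj (i+1) (i+3) hiB hiD (by omega),
          hinj (i+2) (i+3) hiC hiD (by omega), hxCD, hΔ1ne⟩, ?_⟩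
      rw [hΔ1, hΔ2] at hray
      exact sameRay_iff_norm_smul_eq.mp hray


end
end

section
/- Let a, b, c ∈ ℝ^T and τ ∈ (0, 1). Suppose the vectors a − b and b − c are NOT aligned. Then for every δ ∈ ℝ^T with δ ≠ 0, the strict inequality holds: ‖δ + b − a‖₂ + (1/(1−τ))·‖δ‖₂ + ‖c − b + (τ/(1−τ))·δ‖₂ > ‖b − a‖₂ + ‖c − b‖₂. -/
/-!
Put `s = τ / (1 - τ)`, so that `1 / (1 - τ) = 1 + s`, and `p = a - b`, `q = b - c`. The claim
becomes `‖p‖ + ‖q‖ < ‖δ - p‖ + ‖δ‖ + ‖s • δ - q‖ + ‖s • δ‖`, the sum of the triangle inequalities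
for `p = δ + (p - δ)` and `q = s • δ + (q - s • δ)`. In a strictly convex space equality in both
would put `p` and `q` on the ray through `δ ≠ 0`, hence on a common ray, i.e. they would be aligned.
-/

/-- Two vectors `u₁, u₂ ∈ ℝ^T` are aligned if `⟪u₁, u₂⟫ = ‖u₁‖₂ ‖u₂‖₂`. -/
def Aligned {T : ℕ} (u₁ u₂ : EuclideanSpace ℝ (Fin T)) : Prop :=
  (inner ℝ u₁ u₂ : ℝ) = ‖u₁‖ * ‖u₂‖

theorem SameRay.aligned {T : ℕ} {u v : EuclideanSpace ℝ (Fin T)} (h : SameRay ℝ u v) :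
    Aligned u v :=
  inner_eq_norm_mul_iff_real.2 h.norm_smul_eq.symm

section StrictConvex

variable {E : Type*} [NormedAddCommGroup E] [NormedSpace ℝ E] [StrictConvexSpace ℝ E]

theorem sameRay_of_norm_eq_norm_add_norm_sub {w x : E} (h : ‖x‖ = ‖w‖ + ‖x - w‖) :
    SameRay ℝ w x := by
  have hw : SameRay ℝ w (x - w) := sameRay_iff_norm_add.2 (by rwa [add_sub_cancel])
  simpa only [sub_add_cancel] using hw.add_right (SameRay.refl w)

theorem norm_add_norm_lt_of_not_sameRay {p q δ : E} {s : ℝ} (hpq : ¬ SameRay ℝ p q)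
    (hδ : δ ≠ 0) (hs : 0 < s) :
    ‖p‖ + ‖q‖ < ‖δ - p‖ + (1 + s) * ‖δ‖ + ‖s • δ - q‖ := by
  have hsδ : ‖s • δ‖ = s * ‖δ‖ := by rw [norm_smul, Real.norm_of_nonneg hs.le]
  have hp : ‖p‖ ≤ ‖δ‖ + ‖p - δ‖ := norm_le_norm_add_norm_sub' p δ
  have hq : ‖q‖ ≤ ‖s • δ‖ + ‖q - s • δ‖ := norm_le_norm_add_norm_sub' q (s • δ)
  rw [norm_sub_rev δ p, norm_sub_rev (s • δ) q]
  by_contra! hge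
  have hδp : SameRay ℝ δ p := sameRay_of_norm_eq_norm_add_norm_sub (by linarith)
  have hsδq : SameRay ℝ (s • δ) q := sameRay_of_norm_eq_norm_add_norm_sub (by linarith)
  have hδq : SameRay ℝ δ q :=
    (SameRay.sameRay_pos_smul_right δ hs).trans hsδq fun h => absurd h (smul_ne_zero hs.ne' hδ)
  exact hpq (hδp.symm.trans hδq fun h => absurd h hδ)

end StrictConvex

/-- If `a − b` and `b − c` are not aligned, then for every
`δ ≠ 0` and `τ ∈ (0,1)` the strict inequality holds:
`‖δ + b − a‖ + (1/(1−τ))‖δ‖ + ‖c − b + (τ/(1−τ))δ‖ > ‖b − a‖ + ‖c − b‖`. -/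
theorem knot_removal_strict_inequality {T : ℕ} (a b c : EuclideanSpace ℝ (Fin T))
    (τ : ℝ) (hτ : τ ∈ Set.Ioo (0 : ℝ) 1)
    (hna : ¬ Aligned (a - b) (b - c)) :
    ∀ δ : EuclideanSpace ℝ (Fin T), δ ≠ 0 →
      ‖δ + b - a‖ + (1 / (1 - τ)) * ‖δ‖ + ‖c - b + (τ / (1 - τ)) • δ‖ >
        ‖b - a‖ + ‖c - b‖ := by
  intro δ hδ
  obtain ⟨hτ0, hτ1⟩ := hτ
  have hs : 0 < τ / (1 - τ) := div_pos hτ0 (sub_pos.2 hτ1)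
  have hcoeff : 1 / (1 - τ) = 1 + τ / (1 - τ) := by
    field_simp [(sub_pos.2 hτ1).ne']
    ring
  have key := norm_add_norm_lt_of_not_sameRay (fun h => hna h.aligned) hδ hs
  rwa [hcoeff, gt_iff_lt, norm_sub_rev b a, norm_sub_rev c b, show δ + b - a = δ - (a - b) by abel,
    show c - b + (τ / (1 - τ)) • δ = (τ / (1 - τ)) • δ - (b - c) by abel]
end

section
/- Let a, b, c ∈ ℝ^T, τ ∈ (0, 1), and δ ∈ ℝ^T with δ ≠ 0. Then equality ‖δ + b − a‖₂ + (1/(1−τ))·‖δ‖₂ + ‖c − b + (τ/(1−τ))·δ‖₂ = ‖b − a‖₂ + ‖c − b‖₂ holds if and only if δ is aligned with a − b, δ is aligned with b − c, and ‖δ‖₂ ≤ min{‖a − b‖₂, ((1−τ)/τ)·‖b − c‖₂}. -/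
theorem aligned_iff_sameRay {T : ℕ} (x y : EuclideanSpace ℝ (Fin T)) :
    Aligned x y ↔ SameRay ℝ x y := by
  rw [Aligned, inner_eq_norm_mul_iff_real, sameRay_iff_norm_smul_eq, eq_comm]

section NormedSpace

variable {E : Type*} [NormedAddCommGroup E]

theorem norm_sub_add_norm_add_eq_iff (x y x' y' : E) :
    ‖x - y‖ + ‖y‖ + (‖x' - y'‖ + ‖y'‖) = ‖x‖ + ‖x'‖ ↔
      ‖x - y‖ + ‖y‖ = ‖x‖ ∧ ‖x' - y'‖ + ‖y'‖ = ‖x'‖ := by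
  have h := norm_sub_norm_le x y
  have h' := norm_sub_norm_le x' y'
  constructor
  · intro heq
    constructor <;> linarith
  · rintro ⟨h₁, h₂⟩
    rw [h₁, h₂]

variable [NormedSpace ℝ E]

theorem sameRay_pos_smul_left_iff {x y : E} {s : ℝ} (hs : 0 < s) :
    SameRay ℝ (s • x) y ↔ SameRay ℝ x y :=
  ⟨fun h => by simpa [smul_smul, hs.ne'] using h.pos_smul_left (inv_pos.2 hs),
    fun h => h.pos_smul_left hs⟩

theorem sameRay_sub_self_iff {x y : E} : SameRay ℝ (x - y) y ↔ SameRay ℝ y x ∧ ‖y‖ ≤ ‖x‖ := by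
  rcases eq_or_ne y 0 with rfl | hy
  · simp
  have hy' : 0 < ‖y‖ := norm_pos_iff.2 hy
  constructor
  · intro h
    obtain ⟨r, hr, hxy⟩ := h.exists_nonneg_right hy
    have hx : x = (r + 1) • y := by rw [add_smul, one_smul, ← hxy, sub_add_cancel]
    subst hx
    refine ⟨SameRay.sameRay_nonneg_smul_right y (by positivity), ?_⟩
    rw [norm_smul, Real.norm_of_nonneg (by positivity)]
    nlinarith
  · rintro ⟨h, hle⟩
    obtain ⟨t, ht0, rfl⟩ := h.exists_nonneg_left hy
    have ht : 1 ≤ t := by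
      rw [norm_smul, Real.norm_of_nonneg ht0] at hle
      nlinarith
    rw [← one_smul ℝ y, smul_smul, mul_one, ← sub_smul, one_smul]
    exact SameRay.sameRay_nonneg_smul_left y (sub_nonneg.2 ht)

variable [StrictConvexSpace ℝ E]

theorem norm_sub_add_norm_eq_iff {x y : E} :
    ‖x - y‖ + ‖y‖ = ‖x‖ ↔ SameRay ℝ y x ∧ ‖y‖ ≤ ‖x‖ := by
  rw [← sameRay_sub_self_iff, sameRay_iff_norm_add, sub_add_cancel, eq_comm]

theorem norm_sub_smul_add_norm_smul_eq_iff {x y : E} {s : ℝ} (hs : 0 < s) :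
    ‖x - s • y‖ + ‖s • y‖ = ‖x‖ ↔ SameRay ℝ y x ∧ s * ‖y‖ ≤ ‖x‖ := by
  rw [norm_sub_add_norm_eq_iff, sameRay_pos_smul_left_iff hs, norm_smul, Real.norm_of_nonneg hs.le]

end NormedSpace

theorem knot_removal_equality_iff_general {T : ℕ} (a b c δ : EuclideanSpace ℝ (Fin T))
    (τ : ℝ) (hτ : τ ∈ Set.Ioo (0 : ℝ) 1) :
    ‖δ + b - a‖ + (1 / (1 - τ)) * ‖δ‖ + ‖c - b + (τ / (1 - τ)) • δ‖ =
        ‖b - a‖ + ‖c - b‖ ↔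
      Aligned δ (a - b) ∧ Aligned δ (b - c) ∧
        ‖δ‖ ≤ min ‖a - b‖ (((1 - τ) / τ) * ‖b - c‖) := by
  obtain ⟨hτ0, hτ1⟩ := hτ
  have h1τ : 0 < 1 - τ := sub_pos.2 hτ1
  have hs : 0 < τ / (1 - τ) := div_pos hτ0 h1τ
  have hlhs : ‖δ + b - a‖ + (1 / (1 - τ)) * ‖δ‖ + ‖c - b + (τ / (1 - τ)) • δ‖ =
      ‖(a - b) - δ‖ + ‖δ‖ + (‖(b - c) - (τ / (1 - τ)) • δ‖ + ‖(τ / (1 - τ)) • δ‖) := by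
    have hab : ‖δ + b - a‖ = ‖(a - b) - δ‖ := by rw [← norm_neg]; congr 1; abel
    have hbc : ‖c - b + (τ / (1 - τ)) • δ‖ = ‖(b - c) - (τ / (1 - τ)) • δ‖ := by
      rw [← norm_neg]; congr 1; abel
    have hδ : 1 / (1 - τ) * ‖δ‖ = ‖δ‖ + ‖(τ / (1 - τ)) • δ‖ := by
      rw [norm_smul, Real.norm_of_nonneg hs.le]
      field_simp
      ring
    rw [hab, hbc, hδ]
    ring
  have hbound : τ / (1 - τ) * ‖δ‖ ≤ ‖b - c‖ ↔ ‖δ‖ ≤ (1 - τ) / τ * ‖b - c‖ := by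
    rw [div_mul_eq_mul_div, div_le_iff₀ h1τ, div_mul_eq_mul_div, le_div_iff₀ hτ0, mul_comm τ,
      mul_comm (1 - τ)]
  rw [hlhs, norm_sub_rev b a, norm_sub_rev c b, norm_sub_add_norm_add_eq_iff,
    norm_sub_add_norm_eq_iff, norm_sub_smul_add_norm_smul_eq_iff hs, hbound, le_min_iff,
    aligned_iff_sameRay, aligned_iff_sameRay]
  tauto

/-- For `δ ≠ 0` and `τ ∈ (0,1)`, equality
`‖δ + b − a‖ + (1/(1−τ))‖δ‖ + ‖c − b + (τ/(1−τ))δ‖ = ‖b − a‖ + ‖c − b‖`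
holds iff `δ` is aligned with `a − b`, `δ` is aligned with `b − c`, and
`‖δ‖ ≤ min{‖a − b‖, ((1−τ)/τ)‖b − c‖}`. -/
theorem knot_removal_equality_iff {T : ℕ} (a b c δ : EuclideanSpace ℝ (Fin T))
    (τ : ℝ) (hτ : τ ∈ Set.Ioo (0 : ℝ) 1) (hδ : δ ≠ 0) :
    ‖δ + b - a‖ + (1 / (1 - τ)) * ‖δ‖ + ‖c - b + (τ / (1 - τ)) • δ‖ =
        ‖b - a‖ + ‖c - b‖ ↔
      Aligned δ (a - b) ∧ Aligned δ (b - c) ∧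
        ‖δ‖ ≤ min ‖a - b‖ (((1 - τ) / τ) * ‖b - c‖) :=
  knot_removal_equality_iff_general a b c δ τ hτ
end

section
/- Let T ≥ 1 and let X₁, …, X_T be exchangeable nonnegative real random variables with ∑_{t=1}^T X_t > 0 almost surely. Then for every s ∈ {1, …, T} and every β with 0 < β < 1: P( T^β · X_s ≥ ∑_{t ≠ s} X_t ) ≤ (T^β + 1)/T. -/
open MeasureTheory
open scoped BigOperators

/-- `X 0, …, X (T−1)` are exchangeable: every permutation of the coordinates
leaves the joint distribution unchanged. -/
def Exchangeable {Ω : Type*} [MeasureSpace Ω] {T : ℕ} (X : Fin T → Ω → ℝ) : Prop :=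
  ∀ σ : Equiv.Perm (Fin T),
    Measure.map (fun ω => fun t => X (σ t) ω) (volume : Measure Ω) =
    Measure.map (fun ω => fun t => X t ω) (volume : Measure Ω)

/-- If `X 0, …, X (T−1)` are exchangeable nonnegative random
variables with a.s. positive sum, then for every `s` and every `β ∈ (0,1)`:
`P(T^β · X s ≥ ∑_{t ≠ s} X t) ≤ (T^β + 1)/T`. -/
theorem markov_bound_exchangeable {Ω : Type*} [MeasureSpace Ω]
    [IsProbabilityMeasure (volume : Measure Ω)]
    {T : ℕ} (hT : 1 ≤ T) (X : Fin T → Ω → ℝ)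
    (hmeas : ∀ t, Measurable (X t))
    (hnonneg : ∀ t ω, 0 ≤ X t ω)
    (hexch : Exchangeable X)
    (hpos : ∀ᵐ ω ∂(volume : Measure Ω), 0 < ∑ t : Fin T, X t ω)
    (s : Fin T) (β : ℝ) (hβ : 0 < β) (hβ1 : β < 1) :
    (volume : Measure Ω)
        {ω | (T : ℝ) ^ β * X s ω ≥ ∑ t ∈ Finset.univ.erase s, X t ω} ≤
      ENNReal.ofReal (((T : ℝ) ^ β + 1) / T) := by
  classical
  set μ : Measure Ω := volume with hμ
  set S : Ω → ℝ := fun ω => ∑ t, X t ω with hSdef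
  have hSmeas : Measurable S := Finset.measurable_sum _ (fun t _ => hmeas t)
  have hT0 : (0:ℝ) < T := by exact_mod_cast Nat.lt_of_lt_of_le Nat.zero_lt_one hT
  set c : ℝ := (T : ℝ) ^ β + 1 with hc
  have hcpos : (0:ℝ) < c := by positivity
  set g : Fin T → Ω → ENNReal := fun t ω => ENNReal.ofReal (X t ω / S ω) with hg
  have hgmeas : ∀ t, Measurable (g t) := fun t => ((hmeas t).div hSmeas).ennreal_ofReal
  -- equal integrals by exchangeability
  have hint : ∀ t, ∫⁻ ω, g t ω ∂μ = ∫⁻ ω, g s ω ∂μ := by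
    intro t
    set f : (Fin T → ℝ) → ENNReal := fun v => ENNReal.ofReal (v s / ∑ u, v u) with hf
    have hfmeas : Measurable f :=
      ((measurable_pi_apply s).div
        (Finset.measurable_sum _ fun u _ => measurable_pi_apply u)).ennreal_ofReal
    set σ : Equiv.Perm (Fin T) := Equiv.swap s t with hσ
    have hφ : Measurable (fun ω => fun u => X (σ u) ω) :=
      measurable_pi_lambda _ (fun u => hmeas (σ u))
    have hφ' : Measurable (fun ω => fun u => X u ω) :=
      measurable_pi_lambda _ (fun u => hmeas u)
    calc ∫⁻ ω, g t ω ∂μ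
        = ∫⁻ ω, f (fun u => X (σ u) ω) ∂μ := by
          refine lintegral_congr fun ω => ?_
          simp only [hg, hf]
          rw [Equiv.swap_apply_left]
          congr 2
          exact (Equiv.sum_comp σ (fun u => X u ω)).symm
      _ = ∫⁻ v, f v ∂(Measure.map (fun ω => fun u => X (σ u) ω) μ) :=
          (lintegral_map hfmeas hφ).symm
      _ = ∫⁻ v, f v ∂(Measure.map (fun ω => fun u => X u ω) μ) := by rw [hexch σ]
      _ = ∫⁻ ω, f (fun u => X u ω) ∂μ := lintegral_map hfmeas hφ'
      _ = ∫⁻ ω, g s ω ∂μ := rfl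
  -- the normalized variables sum a.e. to 1
  have hsum1 : ∑ t, ∫⁻ ω, g t ω ∂μ = 1 := by
    rw [← lintegral_finset_sum _ (fun t _ => hgmeas t)]
    have hae : ∀ᵐ ω ∂μ, (∑ t, g t ω) = 1 := by
      filter_upwards [hpos] with ω hω
      have hS : 0 < S ω := hω
      have : ∑ t, g t ω = ENNReal.ofReal (∑ t, X t ω / S ω) := by
        rw [ENNReal.ofReal_sum_of_nonneg]
        intro t _
        exact div_nonneg (hnonneg t ω) hS.le
      rw [this, ← Finset.sum_div]
      rw [div_self hS.ne']
      simp
    rw [lintegral_congr_ae hae, lintegral_one, measure_univ]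
  have hTne : (T : ENNReal) ≠ 0 := by
    exact_mod_cast (Nat.lt_of_lt_of_le Nat.zero_lt_one hT).ne'
  have hTtop : (T : ENNReal) ≠ ⊤ := ENNReal.natCast_ne_top T
  have hI : ∫⁻ ω, g s ω ∂μ = (T : ENNReal)⁻¹ := by
    have h1 : (T : ENNReal) * ∫⁻ ω, g s ω ∂μ = 1 := by
      rw [← hsum1, Finset.sum_congr rfl (fun t _ => hint t), Finset.sum_const,
        Finset.card_univ, Fintype.card_fin, nsmul_eq_mul]
    calc ∫⁻ ω, g s ω ∂μ
        = (T : ENNReal)⁻¹ * ((T : ENNReal) * ∫⁻ ω, g s ω ∂μ) := by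
          rw [← mul_assoc, ENNReal.inv_mul_cancel hTne hTtop, one_mul]
      _ = (T : ENNReal)⁻¹ := by rw [h1, mul_one]
  set ε : ENNReal := ENNReal.ofReal (1 / c) with hε
  have hεne : ε ≠ 0 := by
    simp [hε, ENNReal.ofReal_eq_zero, not_le, hcpos]
  have hεtop : ε ≠ ⊤ := ENNReal.ofReal_ne_top
  have hmarkov : ε * μ {ω | ε ≤ g s ω} ≤ ∫⁻ ω, g s ω ∂μ :=
    mul_meas_ge_le_lintegral₀ (hgmeas s).aemeasurable ε
  have hsub : μ {ω | (T : ℝ) ^ β * X s ω ≥ ∑ t ∈ Finset.univ.erase s, X t ω}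
      ≤ μ {ω | ε ≤ g s ω} := by
    refine measure_mono_ae ?_
    filter_upwards [hpos] with ω hω hA
    have hS : 0 < S ω := hω
    have herase : ∑ t ∈ Finset.univ.erase s, X t ω = S ω - X s ω := by
      have h := Finset.add_sum_erase Finset.univ (fun t => X t ω) (Finset.mem_univ s)
      simp only [hSdef]
      linarith [h]
    have hA' : S ω - X s ω ≤ (T : ℝ) ^ β * X s ω := by rw [← herase]; exact hA
    have hXc : S ω ≤ c * X s ω := by rw [hc]; nlinarith
    have hdiv : 1 / c ≤ X s ω / S ω := by
      rw [div_le_div_iff₀ hcpos hS]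
      nlinarith
    exact ENNReal.ofReal_le_ofReal hdiv
  have hεinv : ε⁻¹ = ENNReal.ofReal c := by
    rw [hε, one_div, ENNReal.ofReal_inv_of_pos hcpos, inv_inv]
  calc μ {ω | (T : ℝ) ^ β * X s ω ≥ ∑ t ∈ Finset.univ.erase s, X t ω}
      ≤ μ {ω | ε ≤ g s ω} := hsub
    _ ≤ (∫⁻ ω, g s ω ∂μ) / ε := by
        rw [ENNReal.le_div_iff_mul_le (Or.inl hεne) (Or.inl hεtop)]
        rw [mul_comm]; exact hmarkov
    _ = ENNReal.ofReal c * (T : ENNReal)⁻¹ := by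
        rw [hI, ENNReal.div_eq_inv_mul, hεinv]
    _ = ENNReal.ofReal (c / T) := by
        rw [div_eq_mul_inv, ENNReal.ofReal_mul hcpos.le,
          ENNReal.ofReal_inv_of_pos hT0, ENNReal.ofReal_natCast]
end

section
/- Let T ≥ 1 and let X₁, …, X_T be exchangeable nonnegative real random variables with ∑_{t=1}^T X_t > 0 almost surely. Then for every s ∈ {1, …, T} and every β with 0 < β < 1: P( ∑_{t ≠ s} X_t ≥ (1 − T^{β−1}) · ∑_{t=1}^T X_t ) ≥ 1 − T^{−β}; moreover ∑_{t ≠ s} X_t ≤ ∑_{t=1}^T X_t always holds. -/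
open MeasureTheory
open scoped BigOperators ENNReal

/-- If `X 0, …, X (T−1)` are exchangeable nonnegative random
variables with a.s. positive sum, then for every `s` and every `β ∈ (0,1)`:
`P(∑_{t ≠ s} X t ≥ (1 − T^{β−1}) · ∑ₜ Xₜ) ≥ 1 − T^{−β}`; moreover
`∑_{t ≠ s} X t ≤ ∑ₜ Xₜ` always holds. -/
theorem leave_one_out_sum_bound {Ω : Type*} [MeasureSpace Ω]
    [IsProbabilityMeasure (volume : Measure Ω)]
    {T : ℕ} (hT : 1 ≤ T) (X : Fin T → Ω → ℝ)
    (hmeas : ∀ t, Measurable (X t))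
    (hnonneg : ∀ t ω, 0 ≤ X t ω)
    (hexch : Exchangeable X)
    (hpos : ∀ᵐ ω ∂(volume : Measure Ω), 0 < ∑ t : Fin T, X t ω)
    (s : Fin T) (β : ℝ) (hβ : 0 < β) (hβ1 : β < 1) :
    ENNReal.ofReal (1 - (T : ℝ) ^ (-β)) ≤
      (volume : Measure Ω)
        {ω | (∑ t ∈ Finset.univ.erase s, X t ω) ≥
              (1 - (T : ℝ) ^ (β - 1)) * ∑ t : Fin T, X t ω} ∧
    ∀ ω, (∑ t ∈ Finset.univ.erase s, X t ω) ≤ ∑ t : Fin T, X t ω := by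
  classical
  have hT0 : (0:ℝ) < T := by exact_mod_cast hT
  set S : Ω → ℝ := fun ω => ∑ t : Fin T, X t ω with hSdef
  have hSmeas : Measurable S := Finset.measurable_sum _ fun t _ => hmeas t
  set c : ℝ := (T : ℝ) ^ (β - 1) with hcdef
  have hc0 : 0 < c := Real.rpow_pos_of_pos hT0 _
  set A : Fin T → Set Ω := fun t => {ω | c * S ω < X t ω} with hAdef
  have hAmeas : ∀ t, MeasurableSet (A t) :=
    fun t => measurableSet_lt (hSmeas.const_mul c) (hmeas t)
  -- trivial part: erase sum ≤ full sum
  have htriv : ∀ ω, (∑ t ∈ Finset.univ.erase s, X t ω) ≤ ∑ t : Fin T, X t ω := by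
    intro ω
    exact Finset.sum_le_sum_of_subset_of_nonneg (Finset.erase_subset _ _)
      (fun t _ _ => hnonneg t ω)
  refine ⟨?_, htriv⟩
  -- erase sum = S - X s
  have herase : ∀ ω, (∑ t ∈ Finset.univ.erase s, X t ω) = S ω - X s ω := by
    intro ω
    exact Finset.sum_erase_eq_sub (Finset.mem_univ s)
  -- target set is the complement of A s
  have hset : {ω | (∑ t ∈ Finset.univ.erase s, X t ω) ≥
      (1 - (T : ℝ) ^ (β - 1)) * ∑ t : Fin T, X t ω} = (A s)ᶜ := by
    ext ω
    simp only [Set.mem_setOf_eq, Set.mem_compl_iff, hAdef, not_lt, ge_iff_le]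
    rw [herase ω]
    constructor
    · intro h
      nlinarith [h]
    · intro h
      nlinarith [h]
  -- equal measures by exchangeability
  have hkey : ∀ t, volume (A t) = volume (A s) := by
    intro t
    have hJ : Measurable (fun ω => fun u => X u ω) :=
      measurable_pi_lambda _ fun u => hmeas u
    set σ : Equiv.Perm (Fin T) := Equiv.swap s t with hσ
    have hJσ : Measurable (fun ω => fun u => X (σ u) ω) :=
      measurable_pi_lambda _ fun u => hmeas _
    have hB : MeasurableSet {v : Fin T → ℝ | c * ∑ u, v u < v s} :=
      measurableSet_lt
        ((Finset.measurable_sum _ fun u _ => measurable_pi_apply u).const_mul c)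
        (measurable_pi_apply s)
    have h1 := hexch σ
    have e1 : (fun ω => fun u => X (σ u) ω) ⁻¹' {v : Fin T → ℝ | c * ∑ u, v u < v s}
        = A t := by
      ext ω
      simp only [Set.mem_preimage, Set.mem_setOf_eq, hAdef]
      rw [Equiv.sum_comp σ (fun u => X u ω), hσ, Equiv.swap_apply_left]
    have e2 : (fun ω => fun u => X u ω) ⁻¹' {v : Fin T → ℝ | c * ∑ u, v u < v s}
        = A s := by
      ext ω; simp [hAdef, hSdef]
    calc volume (A t)
        = Measure.map (fun ω => fun u => X (σ u) ω) volume
            {v : Fin T → ℝ | c * ∑ u, v u < v s} := by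
          rw [Measure.map_apply hJσ hB, e1]
      _ = Measure.map (fun ω => fun u => X u ω) volume
            {v : Fin T → ℝ | c * ∑ u, v u < v s} := by rw [h1]
      _ = volume (A s) := by rw [Measure.map_apply hJ hB, e2]
  -- pointwise counting bound
  have hcount : ∀ᵐ ω ∂(volume : Measure Ω),
      (∑ t : Fin T, (A t).indicator (fun _ => (1:ℝ≥0∞)) ω)
        ≤ ENNReal.ofReal ((T:ℝ) ^ ((1:ℝ) - β)) := by
    filter_upwards [hpos] with ω hSω
    set F : Finset (Fin T) := Finset.univ.filter (fun t => ω ∈ A t) with hF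
    have hsum_eq : (∑ t : Fin T, (A t).indicator (fun _ => (1:ℝ≥0∞)) ω)
        = (F.card : ℝ≥0∞) := by
      rw [hF]
      rw [Finset.card_filter]
      push_cast
      apply Finset.sum_congr rfl
      intro t _
      by_cases h : ω ∈ A t <;> simp [h]
    rw [hsum_eq]
    -- card F * (c * S ω) ≤ S ω
    have h1 : (F.card : ℝ) * (c * S ω) ≤ S ω := by
      have h2 : (F.card : ℝ) * (c * S ω) ≤ ∑ t ∈ F, X t ω := by
        rw [← nsmul_eq_mul, ← Finset.sum_const]
        apply Finset.sum_le_sum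
        intro t ht
        have := (Finset.mem_filter.mp ht).2
        exact le_of_lt this
      have h3 : ∑ t ∈ F, X t ω ≤ S ω :=
        Finset.sum_le_sum_of_subset_of_nonneg (Finset.subset_univ F)
          (fun t _ _ => hnonneg t ω)
      linarith
    have h4 : (F.card : ℝ) ≤ (T:ℝ) ^ ((1:ℝ) - β) := by
      have hcS : 0 < c * S ω := mul_pos hc0 hSω
      have h5 : (F.card : ℝ) ≤ 1 / c := by
        rw [le_div_iff₀ hc0]
        have := (mul_le_mul_iff_of_pos_right hSω).mp (by linarith [h1] : (F.card : ℝ) * c * S ω ≤ 1 * S ω)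
        linarith
      have h6 : 1 / c = (T:ℝ) ^ ((1:ℝ) - β) := by
        rw [show (1:ℝ) - β = -(β - 1) by ring, Real.rpow_neg (le_of_lt hT0),
          one_div, hcdef]
      rw [← h6]; exact h5
    calc (F.card : ℝ≥0∞) = ENNReal.ofReal (F.card : ℝ) := by
          rw [ENNReal.ofReal_natCast]
      _ ≤ ENNReal.ofReal ((T:ℝ) ^ ((1:ℝ) - β)) := ENNReal.ofReal_le_ofReal h4
  -- integrate
  have hint : (T : ℝ≥0∞) * volume (A s) ≤ ENNReal.ofReal ((T:ℝ) ^ ((1:ℝ) - β)) := by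
    have h1 : (∑ t : Fin T, volume (A t))
        = ∫⁻ ω, (∑ t : Fin T, (A t).indicator (fun _ => (1:ℝ≥0∞)) ω) ∂volume := by
      rw [lintegral_finset_sum _ (fun t _ => (measurable_const.indicator (hAmeas t)))]
      apply Finset.sum_congr rfl
      intro t _
      rw [lintegral_indicator_const (hAmeas t), one_mul]
    have h2 : (∑ t : Fin T, volume (A t)) = (T : ℝ≥0∞) * volume (A s) := by
      rw [Finset.sum_congr rfl (fun t _ => hkey t), Finset.sum_const,
        Finset.card_univ, Fintype.card_fin, nsmul_eq_mul]
    rw [← h2, h1]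
    calc ∫⁻ ω, (∑ t : Fin T, (A t).indicator (fun _ => (1:ℝ≥0∞)) ω) ∂volume
        ≤ ∫⁻ _, ENNReal.ofReal ((T:ℝ) ^ ((1:ℝ) - β)) ∂volume := lintegral_mono_ae hcount
      _ = ENNReal.ofReal ((T:ℝ) ^ ((1:ℝ) - β)) := by
          simp [lintegral_const]
  -- P(A s) ≤ T^{-β}
  have hAs : volume (A s) ≤ ENNReal.ofReal ((T:ℝ) ^ (-β)) := by
    have hsplit : (T:ℝ) ^ ((1:ℝ) - β) = (T:ℝ) * (T:ℝ) ^ (-β) := by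
      rw [sub_eq_add_neg, Real.rpow_add hT0, Real.rpow_one]
    have : (T : ℝ≥0∞) * volume (A s) ≤ (T : ℝ≥0∞) * ENNReal.ofReal ((T:ℝ) ^ (-β)) := by
      calc (T : ℝ≥0∞) * volume (A s) ≤ ENNReal.ofReal ((T:ℝ) ^ ((1:ℝ) - β)) := hint
        _ = (T : ℝ≥0∞) * ENNReal.ofReal ((T:ℝ) ^ (-β)) := by
          rw [hsplit, ENNReal.ofReal_mul (le_of_lt hT0), ENNReal.ofReal_natCast]
    have hTne : (T : ℝ≥0∞) ≠ 0 := by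
      simp; omega
    have hTfin : (T : ℝ≥0∞) ≠ ⊤ := ENNReal.natCast_ne_top T
    exact (ENNReal.mul_le_mul_iff_right hTne hTfin).mp this
  -- conclude
  rw [hset, prob_compl_eq_one_sub (hAmeas s)]
  have hle1 : (T:ℝ) ^ (-β) ≥ 0 := le_of_lt (Real.rpow_pos_of_pos hT0 _)
  rw [ENNReal.ofReal_sub _ hle1]
  simp only [ENNReal.ofReal_one]
  exact tsub_le_tsub_left hAs 1
end
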